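/- arXiv:1308.4116 — 4 statements merged into one kernel-verified Lean document; each statement's English description precedes it below -/
import Mathlib

section
/- Suppose Ω ⊆ ℙ(ℂ^{d+1}) is a proper linearly convex open set. Then (1) for every p ∈ Ω and R > 0 the closed Hilbert-metric ball B_R(p) = {q ∈ Ω : d_Ω(p,q) ≤ R} is a compact subset of Ω in the subspace topology, and (2) the subspace topology on Ω inherited from ℙ(ℂ^{d+1}) coincides with the topology induced by the Hilbert metric d_Ω. -/
open scoped LinearAlgebra.Projectivization MatrixGroups
open Projectivization

noncomputable section
namespace ComplexConvex

/-! ### Complex projective space and `PSL(d+1, ℂ)` -/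

/-- The underlying vector space `ℂ^{d+1}`. -/
abbrev Vd (d : ℕ) : Type := Fin (d + 1) → ℂ

/-- Complex projective space `ℙ(ℂ^{d+1})`. -/
abbrev CP (d : ℕ) : Type := ℙ ℂ (Vd d)

instance (d : ℕ) : TopologicalSpace (CP d) := instTopologicalSpaceQuotient

abbrev SLd (d : ℕ) : Type := Matrix.SpecialLinearGroup (Fin (d + 1)) ℂ

instance (d : ℕ) : TopologicalSpace (SLd d) :=
  TopologicalSpace.induced (fun g => (g : Matrix (Fin (d + 1)) (Fin (d + 1)) ℂ)) inferInstance

/-- `PSL(d+1, ℂ)`, the quotient of `SL(d+1, ℂ)` by its center. -/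
abbrev PSLd (d : ℕ) : Type := Matrix.ProjectiveSpecialLinearGroup (Fin (d + 1)) ℂ

/-- The projective transformation of `ℙ(ℂ^{d+1})` induced by an element of `SL(d+1,ℂ)`. -/
def slEquiv {d : ℕ} (g : SLd d) : Equiv.Perm (CP d) where
  toFun := Projectivization.map (Matrix.SpecialLinearGroup.toLin' g).toLinearMap
      (Matrix.SpecialLinearGroup.toLin' g).injective
  invFun := Projectivization.map (Matrix.SpecialLinearGroup.toLin' g).symm.toLinearMap
      (Matrix.SpecialLinearGroup.toLin' g).symm.injective
  left_inv := by
    intro x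
    induction x using Projectivization.ind with
    | h v hv => rw [Projectivization.map_mk, Projectivization.map_mk]; simp
  right_inv := by
    intro x
    induction x using Projectivization.ind with
    | h v hv => rw [Projectivization.map_mk, Projectivization.map_mk]; simp

/-- The action of `SL(d+1,ℂ)` on `ℙ(ℂ^{d+1})`, as a homomorphism into permutations. -/
def slPerm (d : ℕ) : SLd d →* Equiv.Perm (CP d) where
  toFun := slEquiv
  map_one' := by
    ext x
    induction x using Projectivization.ind with
    | h v hv =>
      simp only [slEquiv, Equiv.coe_fn_mk, Equiv.Perm.coe_one, id_eq]
      rw [Projectivization.map_mk]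
      simp
  map_mul' g h := by
    ext x
    induction x using Projectivization.ind with
    | h v hv =>
      simp only [slEquiv, Equiv.coe_fn_mk, Equiv.Perm.mul_apply]
      rw [Projectivization.map_mk, Projectivization.map_mk, Projectivization.map_mk]
      simp

/-- The action of `PSL(d+1,ℂ)` on `ℙ(ℂ^{d+1})`. -/
def pslPerm (d : ℕ) : PSLd d →* Equiv.Perm (CP d) :=
  QuotientGroup.lift _ (slPerm d) (by
    intro g hg
    obtain ⟨r, hr, hscalar⟩ := Matrix.SpecialLinearGroup.mem_center_iff.mp hg
    have hr0 : r ≠ 0 := by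
      intro h
      rw [h] at hr
      simp at hr
    ext x
    induction x using Projectivization.ind with
    | h v hv =>
      simp only [slPerm, slEquiv, MonoidHom.coe_mk, OneHom.coe_mk, Equiv.coe_fn_mk,
        Equiv.Perm.coe_one, id_eq]
      rw [Projectivization.map_mk]
      have hval : (Matrix.SpecialLinearGroup.toLin' g).toLinearMap v = r • v := by
        show Matrix.SpecialLinearGroup.toLin' g v = r • v
        rw [Matrix.SpecialLinearGroup.toLin'_apply, Matrix.toLin'_apply, ← hscalar,
          Matrix.scalar_apply]
        funext i
        simp [Matrix.mulVec_diagonal, Pi.smul_apply, smul_eq_mul]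
      rw [Projectivization.mk_eq_mk_iff]
      exact ⟨Units.mk0 r hr0, by simp [hval]⟩)

/-! ### Projective subspaces and convexity notions -/

/-- The projective subspace associated with a linear subspace. -/
def projSet {d : ℕ} (W : Submodule ℂ (Vd d)) : Set (CP d) :=
  {x : CP d | x.submodule ≤ W}

/-- A complex projective line: the projectivization of a 2-dimensional subspace. -/
def IsProjLine {d : ℕ} (L : Set (CP d)) : Prop :=
  ∃ W : Submodule ℂ (Vd d), Module.finrank ℂ W = 2 ∧ L = projSet W

/-- A complex projective hyperplane: the projectivization of a `d`-dimensional subspace. -/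
def IsProjHyperplane {d : ℕ} (H : Set (CP d)) : Prop :=
  ∃ W : Submodule ℂ (Vd d), Module.finrank ℂ W = d ∧ H = projSet W

/-- `Ω` is `ℂ`-convex: its intersection with every complex projective line, and the
complement of this intersection in the line, are connected. -/
def CConvex {d : ℕ} (Ω : Set (CP d)) : Prop :=
  ∀ L : Set (CP d), IsProjLine L → IsPreconnected (L ∩ Ω) ∧ IsPreconnected (L \ Ω)

/-- `Ω` is proper: its closure contains no complex projective line. -/
def IsProperDomain {d : ℕ} (Ω : Set (CP d)) : Prop :=
  ∀ L : Set (CP d), IsProjLine L → ¬ L ⊆ closure Ω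

/-- `Ω` is linearly convex: every point of the complement lies on a complex hyperplane
missing `Ω`. -/
def LinearlyConvex {d : ℕ} (Ω : Set (CP d)) : Prop :=
  ∀ p ∈ (Set.univ : Set (CP d)) \ Ω, ∃ H : Set (CP d),
    IsProjHyperplane H ∧ p ∈ H ∧ H ∩ Ω = ∅

/-- `Ω` is weakly linearly convex: every boundary point lies on a complex hyperplane
missing `Ω`. -/
def WeaklyLinearlyConvex {d : ℕ} (Ω : Set (CP d)) : Prop :=
  ∀ p ∈ frontier Ω, ∃ H : Set (CP d), IsProjHyperplane H ∧ p ∈ H ∧ H ∩ Ω = ∅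

/-- `H` is a complex tangent hyperplane of `Ω` at the boundary point `p`. -/
def IsTangentHyperplaneAt {d : ℕ} (Ω H : Set (CP d)) (p : CP d) : Prop :=
  IsProjHyperplane H ∧ p ∈ frontier Ω ∧ p ∈ H ∧ H ∩ Ω = ∅

/-- `Ω` is strictly `ℂ`-convex: every complex tangent hyperplane of `Ω` meets the boundary
at exactly one point. -/
def StrictlyCConvex {d : ℕ} (Ω : Set (CP d)) : Prop :=
  ∀ (H : Set (CP d)) (p : CP d), IsTangentHyperplaneAt Ω H p → H ∩ frontier Ω = {p}

/-! ### `C^k` boundaries and projective balls -/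

/-- A point lies in the affine chart associated to the linear automorphism `A`. -/
def InChart {d : ℕ} (A : Vd d ≃ₗ[ℂ] Vd d) (x : CP d) : Prop :=
  A x.rep 0 ≠ 0

/-- The affine coordinates of a point in the affine chart associated to `A`. -/
def chartMap {d : ℕ} (A : Vd d ≃ₗ[ℂ] Vd d) (x : CP d) : Fin d → ℂ :=
  fun i => A x.rep i.succ / A x.rep 0

/-- `Ω` has `C^k` boundary: near every boundary point, in some affine chart, the boundary
is the regular zero set of a real-valued `C^k` function. -/
def HasCkBoundary {d : ℕ} (k : WithTop ℕ∞) (Ω : Set (CP d)) : Prop :=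
  ∀ x ∈ frontier Ω, ∃ A : Vd d ≃ₗ[ℂ] Vd d, InChart A x ∧
    ∃ (U : Set (Fin d → ℂ)) (F : (Fin d → ℂ) → ℝ),
      IsOpen U ∧ chartMap A x ∈ U ∧ ContDiffOn ℝ k F U ∧
      (∀ u ∈ U, fderivWithin ℝ F U u ≠ 0) ∧
      (∀ y : CP d, InChart A y → chartMap A y ∈ U → (y ∈ frontier Ω ↔ F (chartMap A y) = 0))

/-- `Ω` is a projective ball: in suitable homogeneous coordinates it is
`{[1 : z₁ : ⋯ : z_d] : ∑ |zᵢ|² < 1}`. -/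
def IsProjBall {d : ℕ} (Ω : Set (CP d)) : Prop :=
  ∃ b : Module.Basis (Fin (d + 1)) ℂ (Vd d),
    Ω = {x : CP d | b.repr x.rep 0 ≠ 0 ∧
      ∑ i : Fin d, ‖b.repr x.rep i.succ / b.repr x.rep 0‖ ^ 2 < 1}

/-! ### Automorphisms, dividing groups -/

/-- The group of projective automorphisms of `Ω`, as a subgroup of `PSL(d+1,ℂ)`. -/
def Aut {d : ℕ} (Ω : Set (CP d)) : Subgroup (PSLd d) where
  carrier := {φ : PSLd d | pslPerm d φ '' Ω = Ω}
  one_mem' := by simp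
  mul_mem' := by
    intro a b ha hb
    simp only [Set.mem_setOf_eq] at ha hb ⊢
    have h : ⇑(pslPerm d (a * b)) = ⇑(pslPerm d a) ∘ ⇑(pslPerm d b) := by
      rw [map_mul]; rfl
    rw [h, Set.image_comp, hb, ha]
  inv_mem' := by
    intro a ha
    simp only [Set.mem_setOf_eq] at ha ⊢
    have h : ⇑(pslPerm d a⁻¹) ∘ ⇑(pslPerm d a) = id := by
      funext x
      rw [map_inv]
      exact Equiv.symm_apply_apply _ _
    calc pslPerm d a⁻¹ '' Ω = pslPerm d a⁻¹ '' (pslPerm d a '' Ω) := by rw [ha]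
      _ = (⇑(pslPerm d a⁻¹) ∘ ⇑(pslPerm d a)) '' Ω := by rw [Set.image_comp]
      _ = Ω := by rw [h, Set.image_id]

/-- `φ` belongs to the identity component `Aut₀(Ω)` of `Aut(Ω)`. -/
def InAut0 {d : ℕ} (Ω : Set (CP d)) (φ : PSLd d) : Prop :=
  ∃ h : φ ∈ Aut Ω, (⟨φ, h⟩ : Aut Ω) ∈ connectedComponent (1 : Aut Ω)

/-- A subgroup `Γ ≤ PSL(d+1,ℂ)` divides `Ω`: it preserves `Ω` and `Γ ⬝ K = Ω` for some
compact `K ⊆ Ω`. -/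
def Divides {d : ℕ} (Γ : Subgroup (PSLd d)) (Ω : Set (CP d)) : Prop :=
  (∀ γ ∈ Γ, pslPerm d γ '' Ω = Ω) ∧
    ∃ K : Set (CP d), K ⊆ Ω ∧ IsCompact K ∧ (⋃ γ ∈ Γ, pslPerm d γ '' K) = Ω

/-- `Ω` is divisible: some discrete subgroup of `PSL(d+1,ℂ)` divides it. -/
def Divisible {d : ℕ} (Ω : Set (CP d)) : Prop :=
  ∃ Γ : Subgroup (PSLd d), DiscreteTopology Γ ∧ Divides Γ Ω

/-- A subgroup is torsion free. -/
def TorsionFree {d : ℕ} (Γ : Subgroup (PSLd d)) : Prop :=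
  ∀ γ ∈ Γ, γ ≠ 1 → ∀ n : ℕ, 0 < n → γ ^ n ≠ 1

/-! ### The Hilbert metric -/

/-- The projectivization of the dual space. -/
abbrev DualP (d : ℕ) : Type := ℙ ℂ (Module.Dual ℂ (Vd d))

/-- The complex dual `Ω*` of `Ω`. -/
def dualSet {d : ℕ} (Ω : Set (CP d)) : Set (DualP d) :=
  {f : DualP d | ∀ x ∈ Ω, f.rep (Projectivization.rep x) ≠ 0}

/-- The Hilbert (Dubois) metric of a proper linearly convex set. -/
def hilbertDist {d : ℕ} (Ω : Set (CP d)) (v w : CP d) : ℝ :=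
  sSup {r : ℝ | ∃ f ∈ dualSet Ω, ∃ g ∈ dualSet Ω,
    r = Real.log ((‖f.rep v.rep‖ * ‖g.rep w.rep‖) /
        (‖f.rep w.rep‖ * ‖g.rep v.rep‖))}

/-! ### Eigenvalues, proximality -/

/-- The ordered list of moduli of the eigenvalues (with multiplicity) of a matrix. -/
def eigMods {d : ℕ} (g : Matrix (Fin (d + 1)) (Fin (d + 1)) ℂ) : List ℝ :=
  ((g.charpoly.roots).map (fun z : ℂ => ‖z‖)).sort (· ≤ ·)

/-- `σ_i(g)` for `i = 1, …, d+1`: the `i`-th smallest modulus of an eigenvalue of `g`. -/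
def sigma' {d : ℕ} (g : Matrix (Fin (d + 1)) (Fin (d + 1)) ℂ) (i : ℕ) : ℝ :=
  (eigMods g).getD (i - 1) 0

/-- An element of `PSL(d+1,ℂ)` is proximal if `σ_d < σ_{d+1}` (for any lift, the property
being independent of the lift). -/
def IsProximal {d : ℕ} (φ : PSLd d) : Prop :=
  ∀ g : SLd d, (QuotientGroup.mk g : PSLd d) = φ →
    sigma' (g : Matrix (Fin (d + 1)) (Fin (d + 1)) ℂ) d <
      sigma' (g : Matrix (Fin (d + 1)) (Fin (d + 1)) ℂ) (d + 1)

/-- Bi-proximal elements: `φ` and `φ⁻¹` are proximal. -/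
def IsBiProximal {d : ℕ} (φ : PSLd d) : Prop :=
  IsProximal φ ∧ IsProximal φ⁻¹

/-- Almost unipotent elements: all eigenvalue moduli equal `1`. -/
def IsAlmostUnipotent {d : ℕ} (φ : PSLd d) : Prop :=
  ∀ g : SLd d, (QuotientGroup.mk g : PSLd d) = φ →
    ∀ r ∈ eigMods (g : Matrix (Fin (d + 1)) (Fin (d + 1)) ℂ), r = 1

/-- `x` is the attracting fixed point `x⁺_φ`: an eigenline for an eigenvalue of modulus
`σ_{d+1}`. -/
def IsAttractingPoint {d : ℕ} (φ : PSLd d) (x : CP d) : Prop :=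
  ∀ g : SLd d, (QuotientGroup.mk g : PSLd d) = φ →
    ∃ μ : ℂ, ‖μ‖ = sigma' (g : Matrix (Fin (d + 1)) (Fin (d + 1)) ℂ) (d + 1) ∧
      (g : Matrix (Fin (d + 1)) (Fin (d + 1)) ℂ).mulVec x.rep = μ • x.rep

/-- `x` is the repelling fixed point `x⁻_φ`: an eigenline for an eigenvalue of modulus
`σ_1`. -/
def IsRepellingPoint {d : ℕ} (φ : PSLd d) (x : CP d) : Prop :=
  ∀ g : SLd d, (QuotientGroup.mk g : PSLd d) = φ →
    ∃ μ : ℂ, ‖μ‖ = sigma' (g : Matrix (Fin (d + 1)) (Fin (d + 1)) ℂ) 1 ∧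
      (g : Matrix (Fin (d + 1)) (Fin (d + 1)) ℂ).mulVec x.rep = μ • x.rep

/-- The operator norm of a matrix with respect to the standard Hermitian norm on
`ℂ^{d+1}`. -/
def opNorm {d : ℕ} (g : Matrix (Fin (d + 1)) (Fin (d + 1)) ℂ) : ℝ :=
  ‖Matrix.toEuclideanCLM (𝕜 := ℂ) g‖

/-! ### Quasi-isometries, word metrics, the Apollonian metric -/

/-- `f` is an `(A,B)`-quasi-isometric embedding with respect to the distance functions
`dX` and `dY`. -/
def IsQIEmbedding {X Y : Type*} (dX : X → X → ℝ) (dY : Y → Y → ℝ)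
    (A B : ℝ) (f : X → Y) : Prop :=
  ∀ x₁ x₂ : X, (1 / A) * dX x₁ x₂ - B ≤ dY (f x₁) (f x₂) ∧
    dY (f x₁) (f x₂) ≤ A * dX x₁ x₂ + B

/-- `f` is an `(A,B)`-quasi-isometry. -/
def IsQuasiIsometry {X Y : Type*} (dX : X → X → ℝ) (dY : Y → Y → ℝ)
    (A B : ℝ) (f : X → Y) : Prop :=
  IsQIEmbedding dX dY A B f ∧ ∃ R > 0, ∀ y : Y, ∃ x : X, dY y (f x) ≤ R

/-- `(X, dX)` is a quasi-geodesic space: for some `(A,B)`, any two points lie on the image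
of an `(A,B)`-quasi-geodesic segment (an `(A,B)`-quasi-isometric embedding of a finite
integer interval with its standard metric). -/
def IsQuasiGeodesicSpace {X : Type*} (dX : X → X → ℝ) : Prop :=
  ∃ A B : ℝ, 0 < A ∧ ∀ x y : X, ∃ (N : ℕ) (f : Fin N → X),
    (∃ i : Fin N, f i = x) ∧ (∃ j : Fin N, f j = y) ∧
    IsQIEmbedding (fun m n : Fin N => |(m : ℝ) - (n : ℝ)|) dX A B f

/-- The word metric on a group with respect to a generating set `S`. -/
def wordDist {Γ : Type*} [Group Γ] (S : Set Γ) (γ₁ γ₂ : Γ) : ℝ :=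
  sInf {r : ℝ | ∃ l : List Γ, (∀ s ∈ l, s ∈ S ∪ S⁻¹) ∧ l.prod = γ₂⁻¹ * γ₁ ∧
    r = l.length}

/-- The Apollonian metric of a bounded set `Ω ⊆ ℂ`, the supremum being taken over
`b₁, b₂ ∈ (ℂ ∪ {∞}) ∖ Ω` with the convention `|z−∞|/|w−∞| = 1` (the terms where `b₁`
and/or `b₂` equal `∞` are listed separately). -/
def apollonianDist (Ω : Set ℂ) (z w : ℂ) : ℝ :=
  sSup ({(0 : ℝ)} ∪
    {r : ℝ | ∃ b ∈ Ωᶜ, r = Real.log (dist z b / dist w b)} ∪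
    {r : ℝ | ∃ b ∈ Ωᶜ, r = Real.log (dist w b / dist z b)} ∪
    {r : ℝ | ∃ b₁ ∈ Ωᶜ, ∃ b₂ ∈ Ωᶜ,
      r = Real.log ((dist z b₁ * dist w b₂) / (dist w b₁ * dist z b₂))})

/-- A `C¹` embedding of the circle into `ℂ`, parameterized `2π`-periodically by `ℝ`. -/
def IsC1CircleEmbedding (f : ℝ → ℂ) : Prop :=
  ContDiff ℝ 1 f ∧ Function.Periodic f (2 * Real.pi) ∧
    Set.InjOn f (Set.Ico 0 (2 * Real.pi)) ∧ ∀ θ : ℝ, deriv f θ ≠ 0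

/-- `Ω` is the bounded open set bounded by the image of the circle embedding `f`. -/
def IsInteriorDomainOf (f : ℝ → ℂ) (Ω : Set ℂ) : Prop :=
  IsOpen Ω ∧ Bornology.IsBounded Ω ∧ IsConnected Ω ∧
    frontier Ω = Set.range f ∧ Ω ∩ Set.range f = ∅

/-!
Normalising linear forms to unit vectors writes `d_Ω(p, ·)` as a supremum of continuous functions
over the compact set of unit vectors `c` with `c(x̂) ≠ 0` on `Ω` (compact because `Ω` is open), so
`d_Ω(p, ·)` is continuous on `Ω`. A closed ball is then closed in the compact space `ℙ(ℂ^{d+1})`: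
at a point `q ∉ Ω` of its closure, linear convexity gives a form `c₁` with `c₁(q̂) = 0` and
properness a form `c₂` with `c₂(q̂) ≠ 0`; the ratio `|c₂| / |c₁|` is bounded on the ball but
blows up at `q`. Properness also gives `d_Ω(p, q) > 0` for `p ≠ q`: the points `[p̂ + z q̂]` outside
`Ω̄` form a nonempty open set of `z`, and hyperplanes through two of them with different `|z|`
have cross ratio `|z₁| / |z₀| ≠ 1`. Positive distances and compact balls make the small balls a
neighbourhood basis.
-/

open Matrix Filter Topology
open scoped Pointwise

lemma IsCompact.continuousOn_sSup_image {X Y α : Type*} [TopologicalSpace X] [TopologicalSpace Y]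
    [ConditionallyCompleteLinearOrder α] [TopologicalSpace α] [OrderTopology α]
    {f : X → Y → α} {s : Set X} {K : Set Y} (hK : IsCompact K)
    (hf : ContinuousOn (fun q : X × Y => f q.1 q.2) (s ×ˢ K)) :
    ContinuousOn (fun x => sSup (f x '' K)) s := by
  rw [continuousOn_iff_continuous_domRestrict]
  have hF : Continuous fun q : s × K => f q.1 q.2 :=
    hf.comp_continuous (f := fun q : s × K => (q.1.1, q.2.1)) (by fun_prop) fun q => ⟨q.1.2, q.2.2⟩
  convert (isCompact_iff_isCompact_univ.mp hK).continuous_sSup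
    (f := fun (x : s) (y : K) => f x y) hF using 2 with x
  rw [Set.domRestrict_apply, Set.image_univ, ← Set.image_eq_range]

lemma exists_dual_ker_eq_of_finrank_add_one {K V : Type*} [Field K] [AddCommGroup V]
    [Module K V] [FiniteDimensional K V] {W : Submodule K V}
    (hW : Module.finrank K W + 1 = Module.finrank K V) :
    ∃ f : Module.Dual K V, f ≠ 0 ∧ LinearMap.ker f = W := by
  have hlt : W < ⊤ := by
    refine lt_top_iff_ne_top.mpr fun h => ?_
    rw [h, finrank_top] at hW
    omega
  obtain ⟨f, hf0, hfW⟩ := W.exists_dual_map_eq_bot_of_lt_top hlt inferInstance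
  refine ⟨f, hf0, (Submodule.eq_of_le_of_finrank_eq (LinearMap.le_ker_iff_map.mpr hfW) ?_).symm⟩
  have := Module.Dual.finrank_ker_add_one_of_ne_zero hf0
  omega

lemma exists_mem_norm_gt_of_mem_nhds {E : Type*} [NormedAddCommGroup E] [NormedSpace ℝ E] {U : Set E}
    {z : E} (hU : U ∈ 𝓝 z) (hz : z ≠ 0) : ∃ w ∈ U, ‖z‖ < ‖w‖ := by
  by_contra! h
  have hint : z ∈ interior (Metric.closedBall 0 ‖z‖) :=
    interior_mono (fun w hw => mem_closedBall_zero_iff.mpr (h w hw))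
      (mem_interior_iff_mem_nhds.mpr hU)
  rw [interior_closedBall _ (norm_ne_zero_iff.mpr hz), mem_ball_zero_iff] at hint
  exact lt_irrefl _ hint

lemma exists_sublevel_subset_of_mem_nhds {X : Type*} [TopologicalSpace X] {f : X → ℝ}
    (hf : Continuous f) {x : X} (hpos : ∀ y, y ≠ x → 0 < f y) {r : ℝ} (hr : 0 < r)
    (hK : IsCompact {y | f y ≤ r}) {S : Set X} (hS : S ∈ 𝓝 x) :
    ∃ ε > 0, {y | f y < ε} ⊆ S := by
  obtain ⟨m, hm, hmK⟩ := (hK.diff isOpen_interior).exists_forall_le' hf.continuousOn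
    fun y hy => hpos y fun h => hy.2 (h ▸ mem_interior_iff_mem_nhds.mpr hS)
  refine ⟨min r m, lt_min hr hm, fun y (hy : f y < min r m) => interior_subset ?_⟩
  by_contra hyS
  exact (hy.trans_le (min_le_right _ _)).not_ge
    (hmK y ⟨(hy.trans_le (min_le_left _ _)).le, hyS⟩)

section ProjectiveSpace

variable {d : ℕ}

lemma isQuotientMap_mk' : Topology.IsQuotientMap (mk' ℂ : {v : Vd d // v ≠ 0} → CP d) :=
  isQuotientMap_quotient_mk'

lemma continuous_mk' : Continuous (mk' ℂ : {v : Vd d // v ≠ 0} → CP d) :=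
  isQuotientMap_mk'.continuous

lemma isOpenMap_mk' : IsOpenMap (mk' ℂ : {v : Vd d // v ≠ 0} → CP d) := by
  intro U hU
  have hemb : Topology.IsOpenEmbedding (Subtype.val : {v : Vd d // v ≠ 0} → Vd d) :=
    isOpen_compl_singleton.isOpenEmbedding_subtypeVal
  rw [← isQuotientMap_mk'.isOpen_preimage, hemb.isOpen_iff_image_isOpen]
  have hsat : Subtype.val '' (mk' ℂ ⁻¹' (mk' ℂ '' U)) = ⋃ a : ℂˣ, a • (Subtype.val '' U) := by
    ext v
    simp only [Set.mem_image, Set.mem_preimage, Set.mem_iUnion, Set.mem_smul_set, mk'_eq_mk]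
    constructor
    · rintro ⟨w, ⟨u, hu, huw⟩, rfl⟩
      obtain ⟨a, ha⟩ := (mk_eq_mk_iff ℂ _ _ _ _).mp huw.symm
      exact ⟨a, u, ⟨u, hu, rfl⟩, ha⟩
    · rintro ⟨a, _, ⟨u, hu, rfl⟩, rfl⟩
      refine ⟨⟨a • u.1, (smul_ne_zero_iff_ne a).mpr u.2⟩, ⟨u, hu, ?_⟩, rfl⟩
      exact ((mk_eq_mk_iff ℂ _ _ _ _).mpr ⟨a, rfl⟩).symm
  rw [hsat]
  exact isOpen_iUnion fun a => (hemb.isOpenMap U hU).smul a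

lemma isOpenQuotientMap_mk' : IsOpenQuotientMap (mk' ℂ : {v : Vd d // v ≠ 0} → CP d) :=
  ⟨fun x => ⟨⟨x.rep, x.rep_nonzero⟩, mk_rep x⟩, continuous_mk', isOpenMap_mk'⟩

instance : CompactSpace (CP d) :=
  Function.Surjective.compactSpace
    (f := fun v : Metric.sphere (0 : Vd d) 1 => mk' ℂ ⟨v.1, ne_zero_of_mem_unit_sphere v⟩)
    (continuous_mk'.comp (by fun_prop)) fun x => by
      have hx : ‖x.rep‖ ≠ 0 := norm_ne_zero_iff.mpr x.rep_nonzero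
      refine ⟨⟨(‖x.rep‖ : ℂ)⁻¹ • x.rep, by simp [norm_smul, hx]⟩, ?_⟩
      exact ((mk_eq_mk_iff ℂ _ _ _ x.rep_nonzero).mpr
        ⟨Units.mk0 _ (by simpa using hx), rfl⟩).trans (mk_rep x)

lemma mem_projSet_iff {W : Submodule ℂ (Vd d)} {x : CP d} : x ∈ projSet W ↔ x.rep ∈ W := by
  rw [projSet, Set.mem_ofPred_eq, submodule_eq, Submodule.span_singleton_le_iff_mem]

lemma mk_mem_projSet_iff {W : Submodule ℂ (Vd d)} {v : Vd d} (hv : v ≠ 0) :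
    mk ℂ v hv ∈ projSet W ↔ v ∈ W := by
  rw [projSet, Set.mem_ofPred_eq, submodule_mk, Submodule.span_singleton_le_iff_mem]

end ProjectiveSpace

section CrossRatio

variable {d : ℕ}

/-- `|c(x̂)| / ‖x̂‖` does not depend on the lift `x̂` of `x`; this is what makes it continuous on
projective space. -/
def dotAbs (c : Vd d) (x : CP d) : ℝ := ‖c ⬝ᵥ x.rep‖ / ‖x.rep‖

lemma dotAbs_mk (c : Vd d) {v : Vd d} (hv : v ≠ 0) : dotAbs c (mk ℂ v hv) = ‖c ⬝ᵥ v‖ / ‖v‖ := by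
  obtain ⟨a, ha⟩ := exists_smul_eq_mk_rep ℂ v hv
  rw [dotAbs, ← ha, Units.smul_def, dotProduct_smul, smul_eq_mul, norm_mul, norm_smul]
  exact mul_div_mul_left _ _ (norm_ne_zero_iff.mpr a.ne_zero)

lemma dotAbs_smul (a : ℂ) (c : Vd d) (x : CP d) : dotAbs (a • c) x = ‖a‖ * dotAbs c x := by
  rw [dotAbs, dotAbs, smul_dotProduct, smul_eq_mul, norm_mul, mul_div_assoc]

lemma dotProduct_rep_mk_eq_zero_iff {c v : Vd d} (hv : v ≠ 0) :
    c ⬝ᵥ (mk ℂ v hv).rep = 0 ↔ c ⬝ᵥ v = 0 := by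
  obtain ⟨a, ha⟩ := exists_smul_eq_mk_rep ℂ v hv
  rw [← ha, Units.smul_def, dotProduct_smul, smul_eq_mul, mul_eq_zero]
  simp [a.ne_zero]

lemma continuous_dotAbs : Continuous fun p : Vd d × CP d => dotAbs p.1 p.2 := by
  rw [← (IsOpenQuotientMap.id.prodMap isOpenQuotientMap_mk').continuous_comp_iff]
  have hlift : (fun p : Vd d × CP d => dotAbs p.1 p.2) ∘ Prod.map id (mk' ℂ) =
      fun p : Vd d × {v : Vd d // v ≠ 0} => ‖p.1 ⬝ᵥ p.2.1‖ / ‖p.2.1‖ :=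
    funext fun p => dotAbs_mk p.1 p.2.2
  rw [hlift]
  exact Continuous.div (by fun_prop) (by fun_prop) fun p => norm_ne_zero_iff.mpr p.2.2

@[fun_prop]
lemma Continuous.dotAbs {X : Type*} [TopologicalSpace X] {f : X → Vd d} {g : X → CP d}
    (hf : Continuous f) (hg : Continuous g) : Continuous fun x => dotAbs (f x) (g x) :=
  continuous_dotAbs.comp (hf.prodMk hg)

def logCrossRatio (c₁ c₂ : Vd d) (v w : CP d) : ℝ :=
  Real.log (dotAbs c₁ v * dotAbs c₂ w / (dotAbs c₁ w * dotAbs c₂ v))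

lemma log_ratio_rep_eq_logCrossRatio (c₁ c₂ : Vd d) (v w : CP d) :
    Real.log (‖c₁ ⬝ᵥ v.rep‖ * ‖c₂ ⬝ᵥ w.rep‖ / (‖c₁ ⬝ᵥ w.rep‖ * ‖c₂ ⬝ᵥ v.rep‖)) =
      logCrossRatio c₁ c₂ v w := by
  have hv : ‖v.rep‖ ≠ 0 := norm_ne_zero_iff.mpr v.rep_nonzero
  have hw : ‖w.rep‖ ≠ 0 := norm_ne_zero_iff.mpr w.rep_nonzero
  rw [logCrossRatio, dotAbs, dotAbs, dotAbs, dotAbs, div_mul_div_comm, div_mul_div_comm,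
    mul_comm ‖w.rep‖, div_div_div_cancel_right₀ (mul_ne_zero hv hw)]

lemma logCrossRatio_smul {a b : ℂ} (ha : a ≠ 0) (hb : b ≠ 0) (c₁ c₂ : Vd d) (v w : CP d) :
    logCrossRatio (a • c₁) (b • c₂) v w = logCrossRatio c₁ c₂ v w := by
  simp only [logCrossRatio, dotAbs_smul]
  congr 1
  have hab : ‖a‖ * ‖b‖ ≠ 0 := by positivity
  rw [show ‖a‖ * dotAbs c₁ v * (‖b‖ * dotAbs c₂ w) =
      ‖a‖ * ‖b‖ * (dotAbs c₁ v * dotAbs c₂ w) by ring,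
    show ‖a‖ * dotAbs c₁ w * (‖b‖ * dotAbs c₂ v) =
      ‖a‖ * ‖b‖ * (dotAbs c₁ w * dotAbs c₂ v) by ring, mul_div_mul_left _ _ hab]

end CrossRatio

section DualCone

variable {d : ℕ} {Ω : Set (CP d)}

def dualCone (Ω : Set (CP d)) : Set (Vd d) := {c | ∀ x ∈ Ω, c ⬝ᵥ x.rep ≠ 0}

def dualSphere (Ω : Set (CP d)) : Set (Vd d) := Metric.sphere 0 1 ∩ dualCone Ω

lemma smul_mem_dualCone {c : Vd d} (hc : c ∈ dualCone Ω) {a : ℂ} (ha : a ≠ 0) :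
    a • c ∈ dualCone Ω := fun x hx => by
  rw [smul_dotProduct, smul_eq_mul]
  exact mul_ne_zero ha (hc x hx)

lemma exists_smul_mem_dualSphere {c : Vd d} (hc : c ∈ dualCone Ω) (hc0 : c ≠ 0) :
    ∃ a : ℂ, a ≠ 0 ∧ a • c ∈ dualSphere Ω := by
  have hn : (‖c‖ : ℂ) ≠ 0 := by simpa using hc0
  exact ⟨(‖c‖ : ℂ)⁻¹, inv_ne_zero hn,
    by simpa using norm_smul_inv_norm (𝕜 := ℂ) hc0, smul_mem_dualCone hc (inv_ne_zero hn)⟩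

lemma dotAbs_pos {c : Vd d} (hc : c ∈ dualCone Ω) {x : CP d} (hx : x ∈ Ω) : 0 < dotAbs c x :=
  div_pos (norm_pos_iff.mpr (hc x hx)) (norm_pos_iff.mpr x.rep_nonzero)

lemma isClosed_dualSphere (hΩ : IsOpen Ω) : IsClosed (dualSphere Ω) := by
  refine isOpen_compl_iff.mp (isOpen_iff_mem_nhds.mpr fun c hc => ?_)
  by_cases hc1 : c ∈ Metric.sphere (0 : Vd d) 1
  swap
  · exact mem_of_superset (Metric.isClosed_sphere.isOpen_compl.mem_nhds hc1) fun c' hc' h =>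
      hc' h.1
  obtain ⟨x, hx, hcx⟩ : ∃ x ∈ Ω, c ⬝ᵥ x.rep = 0 := by
    by_contra! h
    exact hc ⟨hc1, h⟩
  obtain ⟨i, hi⟩ := Function.ne_iff.mp (ne_zero_of_mem_unit_sphere ⟨c, hc1⟩)
  set u : Vd d := Pi.single i 1
  have hcu : c ⬝ᵥ u ≠ 0 := by simpa [u] using hi
  -- `g c'` is the point where `c'` vanishes on the affine line through `x̂` in direction `u`.
  set g : Vd d → Vd d := fun c' => x.rep - (c' ⬝ᵥ x.rep / c' ⬝ᵥ u) • u
  have hg : ContinuousAt g c := by fun_prop (disch := exact hcu)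
  have hlift : IsOpen (Subtype.val '' (mk' ℂ ⁻¹' Ω : Set {v : Vd d // v ≠ 0})) :=
    isOpen_compl_singleton.isOpenMap_subtype_val _ (hΩ.preimage continuous_mk')
  have hgc : g c ∈ Subtype.val '' (mk' ℂ ⁻¹' Ω : Set {v : Vd d // v ≠ 0}) :=
    ⟨⟨x.rep, x.rep_nonzero⟩, by simpa [mk'_eq_mk] using hx, by simp [g, hcx]⟩
  filter_upwards [hg.preimage_mem_nhds (hlift.mem_nhds hgc),
    (continuous_id.dotProduct continuous_const).continuousAt.preimage_mem_nhds
      (isOpen_ne.mem_nhds hcu)] with c' ⟨y, hyΩ, hyg⟩ hc'u hc'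
  refine hc'.2 _ hyΩ ((dotProduct_rep_mk_eq_zero_iff y.2).mpr ?_)
  simp only [hyg, g, dotProduct_sub, dotProduct_smul, smul_eq_mul]
  rw [div_mul_cancel₀ _ (show c' ⬝ᵥ u ≠ 0 from hc'u), sub_self]

lemma isCompact_dualSphere (hΩ : IsOpen Ω) : IsCompact (dualSphere Ω) :=
  (isCompact_sphere 0 1).of_isClosed_subset (isClosed_dualSphere hΩ) Set.inter_subset_left

lemma continuousOn_logCrossRatio :
    ContinuousOn (fun q : (Vd d × Vd d) × (CP d × CP d) => logCrossRatio q.1.1 q.1.2 q.2.1 q.2.2)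
      ((dualCone Ω ×ˢ dualCone Ω) ×ˢ (Ω ×ˢ Ω)) := by
  have hpos : ∀ q ∈ (dualCone Ω ×ˢ dualCone Ω) ×ˢ (Ω ×ˢ Ω),
      0 < dotAbs q.1.1 q.2.1 ∧ 0 < dotAbs q.1.2 q.2.2 ∧
        0 < dotAbs q.1.1 q.2.2 ∧ 0 < dotAbs q.1.2 q.2.1 :=
    fun q ⟨⟨h₁, h₂⟩, hv, hw⟩ =>
      ⟨dotAbs_pos h₁ hv, dotAbs_pos h₂ hw, dotAbs_pos h₁ hw, dotAbs_pos h₂ hv⟩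
  refine ContinuousOn.log (ContinuousOn.div (by fun_prop) (by fun_prop) fun q hq => ?_)
    fun q hq => ?_
  · obtain ⟨-, -, h₃, h₄⟩ := hpos q hq
    exact (mul_pos h₃ h₄).ne'
  · obtain ⟨h₁, h₂, h₃, h₄⟩ := hpos q hq
    exact (div_pos (mul_pos h₁ h₂) (mul_pos h₃ h₄)).ne'

end DualCone

section HilbertDist

variable {d : ℕ} {Ω : Set (CP d)}

def dualVec (f : DualP d) : Vd d := (dotProductEquiv ℂ (Fin (d + 1))).symm f.rep

lemma dualVec_dotProduct (f : DualP d) (v : Vd d) : dualVec f ⬝ᵥ v = f.rep v := by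
  conv_rhs => rw [← (dotProductEquiv ℂ (Fin (d + 1))).apply_symm_apply f.rep]
  rfl

lemma dualVec_ne_zero (f : DualP d) : dualVec f ≠ 0 := by
  simpa [dualVec] using f.rep_nonzero

lemma mem_dualSet_iff {f : DualP d} : f ∈ dualSet Ω ↔ dualVec f ∈ dualCone Ω := by
  simp only [dualSet, dualCone, Set.mem_ofPred_eq, dualVec_dotProduct]

lemma exists_dualVec_eq_smul {c : Vd d} (hc : c ≠ 0) :
    ∃ f : DualP d, ∃ a : ℂ, a ≠ 0 ∧ dualVec f = a • c := by
  have he : dotProductEquiv ℂ (Fin (d + 1)) c ≠ 0 := by simpa using hc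
  obtain ⟨a, ha⟩ := exists_smul_eq_mk_rep ℂ _ he
  refine ⟨mk ℂ _ he, a, a.ne_zero, ?_⟩
  rw [dualVec, ← ha, Units.smul_def, map_smul, LinearEquiv.symm_apply_apply]

lemma log_ratio_rep_eq_logCrossRatio_dualVec (f g : DualP d) (v w : CP d) :
    Real.log ((‖f.rep v.rep‖ * ‖g.rep w.rep‖) / (‖f.rep w.rep‖ * ‖g.rep v.rep‖)) =
      logCrossRatio (dualVec f) (dualVec g) v w := by
  simp only [← dualVec_dotProduct, log_ratio_rep_eq_logCrossRatio]

lemma hilbertDist_eq_sSup (v w : CP d) :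
    hilbertDist Ω v w = sSup ((fun c : Vd d × Vd d => logCrossRatio c.1 c.2 v w) ''
      (dualSphere Ω ×ˢ dualSphere Ω)) := by
  rw [hilbertDist]
  congr 1
  ext r
  simp only [Set.mem_ofPred_eq, Set.mem_image, Set.mem_prod, Prod.exists,
    log_ratio_rep_eq_logCrossRatio_dualVec]
  constructor
  · rintro ⟨f, hf, g, hg, rfl⟩
    obtain ⟨a, ha, haf⟩ := exists_smul_mem_dualSphere (mem_dualSet_iff.mp hf) (dualVec_ne_zero f)
    obtain ⟨b, hb, hbg⟩ := exists_smul_mem_dualSphere (mem_dualSet_iff.mp hg) (dualVec_ne_zero g)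
    exact ⟨_, _, ⟨haf, hbg⟩, logCrossRatio_smul ha hb _ _ v w⟩
  · rintro ⟨c₁, c₂, ⟨hc₁, hc₂⟩, rfl⟩
    obtain ⟨f, a, ha, hf⟩ := exists_dualVec_eq_smul (ne_zero_of_mem_unit_sphere ⟨c₁, hc₁.1⟩)
    obtain ⟨g, b, hb, hg⟩ := exists_dualVec_eq_smul (ne_zero_of_mem_unit_sphere ⟨c₂, hc₂.1⟩)
    refine ⟨f, mem_dualSet_iff.mpr (hf ▸ smul_mem_dualCone hc₁.2 ha),
      g, mem_dualSet_iff.mpr (hg ▸ smul_mem_dualCone hc₂.2 hb), ?_⟩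
    rw [hf, hg, logCrossRatio_smul ha hb]

lemma logCrossRatio_self (c₁ c₂ : Vd d) (v : CP d) : logCrossRatio c₁ c₂ v v = 0 := by
  rw [logCrossRatio]
  rcases eq_or_ne (dotAbs c₁ v * dotAbs c₂ v) 0 with h | h <;> simp [h]

lemma hilbertDist_self (x : CP d) : hilbertDist Ω x x = 0 := by
  rw [hilbertDist_eq_sSup]
  simp only [logCrossRatio_self]
  exact le_antisymm (Real.sSup_nonpos (by simp)) (Real.sSup_nonneg (by simp))

lemma logCrossRatio_le_hilbertDist (hΩ : IsOpen Ω) {v w : CP d} (hv : v ∈ Ω) (hw : w ∈ Ω)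
    {c₁ c₂ : Vd d} (hc₁ : c₁ ∈ dualCone Ω) (hc₂ : c₂ ∈ dualCone Ω) (hc₁0 : c₁ ≠ 0)
    (hc₂0 : c₂ ≠ 0) : logCrossRatio c₁ c₂ v w ≤ hilbertDist Ω v w := by
  obtain ⟨a, ha, ha₁⟩ := exists_smul_mem_dualSphere hc₁ hc₁0
  obtain ⟨b, hb, hb₂⟩ := exists_smul_mem_dualSphere hc₂ hc₂0
  have hbdd := ((isCompact_dualSphere hΩ).prod (isCompact_dualSphere hΩ)).bddAbove_image
    (continuousOn_logCrossRatio.comp (f := fun c : Vd d × Vd d => (c, (v, w)))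
      (by fun_prop) fun c hc => ⟨⟨hc.1.2, hc.2.2⟩, hv, hw⟩)
  rw [← logCrossRatio_smul ha hb, hilbertDist_eq_sSup]
  exact le_csSup hbdd ⟨(a • c₁, b • c₂), ⟨ha₁, hb₂⟩, rfl⟩

lemma continuousOn_hilbertDist (hΩ : IsOpen Ω) {p : CP d} (hp : p ∈ Ω) :
    ContinuousOn (hilbertDist Ω p) Ω := by
  have hF : ContinuousOn (fun q : CP d × (Vd d × Vd d) => logCrossRatio q.2.1 q.2.2 p q.1)
      (Ω ×ˢ (dualSphere Ω ×ˢ dualSphere Ω)) := by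
    refine (continuousOn_logCrossRatio (Ω := Ω)).comp
      (f := fun q : CP d × (Vd d × Vd d) => (q.2, (p, q.1))) (by fun_prop) ?_
    rintro q ⟨hw, ⟨-, hc₁⟩, ⟨-, hc₂⟩⟩
    exact ⟨⟨hc₁, hc₂⟩, hp, hw⟩
  have hsup : ContinuousOn (fun w => sSup ((fun c : Vd d × Vd d => logCrossRatio c.1 c.2 p w) ''
      (dualSphere Ω ×ˢ dualSphere Ω))) Ω :=
    IsCompact.continuousOn_sSup_image ((isCompact_dualSphere hΩ).prod (isCompact_dualSphere hΩ)) hF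
  exact hsup.congr fun w _ => hilbertDist_eq_sSup p w

end HilbertDist

section LinearConvexity

variable {d : ℕ} {Ω : Set (CP d)}

lemma exists_mem_dualCone_dotProduct_eq_zero (hlc : LinearlyConvex Ω) {v : Vd d} (hv : v ≠ 0)
    (hvΩ : mk ℂ v hv ∉ Ω) : ∃ c ∈ dualCone Ω, c ≠ 0 ∧ c ⬝ᵥ v = 0 := by
  obtain ⟨H, ⟨W, hW, rfl⟩, hvH, hHΩ⟩ := hlc _ ⟨Set.mem_univ _, hvΩ⟩
  obtain ⟨f, hf0, hker⟩ := exists_dual_ker_eq_of_finrank_add_one (W := W) (by simp [hW])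
  set c := (dotProductEquiv ℂ (Fin (d + 1))).symm f
  have hc : ∀ u, c ⬝ᵥ u = 0 ↔ u ∈ W := fun u => by
    rw [← hker, LinearMap.mem_ker, ← dotProductEquiv_apply_apply, LinearEquiv.apply_symm_apply]
  refine ⟨c, fun x hx h => ?_, by simpa [c] using hf0, (hc v).mpr ((mk_mem_projSet_iff hv).mp hvH)⟩
  exact (Set.eq_empty_iff_forall_notMem.mp hHΩ) x ⟨mem_projSet_iff.mpr ((hc _).mp h), hx⟩

lemma linearIndependent_rep_pair {p q : CP d} (hpq : p ≠ q) :
    LinearIndependent ℂ ![p.rep, q.rep] := by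
  have h := independent_iff.mp ((independent_pair_iff_ne p q).mpr hpq)
  have hcomp : Projectivization.rep ∘ ![p, q] = ![p.rep, q.rep] := by
    ext i
    fin_cases i <;> rfl
  rwa [hcomp] at h

lemma isProjLine_projSet_span_pair {p q : CP d} (hpq : p ≠ q) :
    IsProjLine (projSet (Submodule.span ℂ {p.rep, q.rep})) := by
  refine ⟨_, ?_, rfl⟩
  rw [← Matrix.range_cons_cons_empty p.rep q.rep ![],
    finrank_span_eq_card (linearIndependent_rep_pair hpq), Fintype.card_fin]

lemma rep_add_smul_rep_ne_zero {p q : CP d} (hpq : p ≠ q) (z : ℂ) : p.rep + z • q.rep ≠ 0 :=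
  fun h => one_ne_zero (LinearIndependent.pair_iff.mp (linearIndependent_rep_pair hpq) 1 z
    (by rwa [one_smul])).1

lemma mk_eq_of_smul_rep_eq {v : Vd d} (hv : v ≠ 0) {x : CP d} {a : ℂ} (h : a • x.rep = v) :
    mk ℂ v hv = x :=
  ((mk_eq_mk_iff' ℂ _ _ hv x.rep_nonzero).mpr ⟨a, h⟩).trans (mk_rep x)

/-- Covers the line through `p` and `q` except for the point `q` itself. -/
def lineParam {p q : CP d} (hpq : p ≠ q) (z : ℂ) : CP d :=
  mk ℂ (p.rep + z • q.rep) (rep_add_smul_rep_ne_zero hpq z)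

lemma continuous_lineParam {p q : CP d} (hpq : p ≠ q) : Continuous (lineParam hpq) :=
  continuous_mk'.comp ((by fun_prop : Continuous fun z : ℂ => p.rep + z • q.rep).subtype_mk _)

lemma lineParam_zero {p q : CP d} (hpq : p ≠ q) : lineParam hpq 0 = p :=
  mk_eq_of_smul_rep_eq _ (a := 1) (by simp)

lemma exists_lineParam_notMem_closure (hproper : IsProperDomain Ω) {p q : CP d} (hpq : p ≠ q)
    (hq : q ∈ closure Ω) : ∃ z : ℂ, lineParam hpq z ∉ closure Ω := by
  obtain ⟨r, hrL, hr⟩ := Set.not_subset.mp (hproper _ (isProjLine_projSet_span_pair hpq))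
  obtain ⟨a, b, hab⟩ := Submodule.mem_span_pair.mp (mem_projSet_iff.mp hrL)
  have ha : a ≠ 0 := by
    rintro rfl
    rw [zero_smul, zero_add] at hab
    exact hr ((mk_rep r).symm.trans (mk_eq_of_smul_rep_eq _ hab) ▸ hq)
  have hbr : lineParam hpq (b / a) = r := mk_eq_of_smul_rep_eq _ (a := a⁻¹) (by
    rw [← hab, smul_add, smul_smul, smul_smul, inv_mul_cancel₀ ha, one_smul, div_eq_inv_mul])
  exact ⟨b / a, hbr ▸ hr⟩

end LinearConvexity

section HilbertMetric

variable {d : ℕ} {Ω : Set (CP d)}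

lemma hilbertDist_pos (hΩ : IsOpen Ω) (hlc : LinearlyConvex Ω) (hproper : IsProperDomain Ω)
    {p q : CP d} (hp : p ∈ Ω) (hq : q ∈ Ω) (hpq : p ≠ q) : 0 < hilbertDist Ω p q := by
  have hdual : ∀ z, lineParam hpq z ∉ Ω →
      ∃ c ∈ dualCone Ω, c ≠ 0 ∧ ‖c ⬝ᵥ p.rep‖ = ‖z‖ * ‖c ⬝ᵥ q.rep‖ := by
    intro z hz
    obtain ⟨c, hc, hc0, hcz⟩ := exists_mem_dualCone_dotProduct_eq_zero hlc _ hz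
    refine ⟨c, hc, hc0, ?_⟩
    rw [dotProduct_add, dotProduct_smul, smul_eq_mul, add_eq_zero_iff_eq_neg] at hcz
    rw [hcz, norm_neg, norm_mul]
  obtain ⟨z₀, hz₀⟩ := exists_lineParam_notMem_closure hproper hpq (subset_closure hq)
  have hz₀0 : z₀ ≠ 0 := by
    rintro rfl
    exact hz₀ (by rw [lineParam_zero]; exact subset_closure hp)
  obtain ⟨z₁, hz₁, hlt⟩ := exists_mem_norm_gt_of_mem_nhds
    ((isClosed_closure.isOpen_compl.preimage (continuous_lineParam hpq)).mem_nhds hz₀) hz₀0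
  obtain ⟨c₀, hc₀, hc₀0, h₀⟩ := hdual z₀ fun h => hz₀ (subset_closure h)
  obtain ⟨c₁, hc₁, hc₁0, h₁⟩ := hdual z₁ fun h => hz₁ (subset_closure h)
  have hq₀ : ‖c₀ ⬝ᵥ q.rep‖ ≠ 0 := norm_ne_zero_iff.mpr (hc₀ q hq)
  have hq₁ : ‖c₁ ⬝ᵥ q.rep‖ ≠ 0 := norm_ne_zero_iff.mpr (hc₁ q hq)
  calc 0 < Real.log (‖z₁‖ / ‖z₀‖) := Real.log_pos ((one_lt_div (norm_pos_iff.mpr hz₀0)).mpr hlt)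
    _ = logCrossRatio c₁ c₀ p q := by
      rw [← log_ratio_rep_eq_logCrossRatio, h₀, h₁]
      congr 1
      field_simp
    _ ≤ hilbertDist Ω p q := logCrossRatio_le_hilbertDist hΩ hp hq hc₁ hc₀ hc₁0 hc₀0

lemma exists_mem_dualCone_dotProduct_rep_ne_zero (hlc : LinearlyConvex Ω)
    (hproper : IsProperDomain Ω) {p q : CP d} (hp : p ∈ Ω) (hq : q ∉ Ω) :
    ∃ c ∈ dualCone Ω, c ≠ 0 ∧ c ⬝ᵥ q.rep ≠ 0 := by
  have hqp : q ≠ p := fun h => hq (h ▸ hp)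
  obtain ⟨z, hz0, hz⟩ : ∃ z : ℂ, z ≠ 0 ∧ lineParam hqp z ∉ Ω := by
    by_cases hqc : q ∈ closure Ω
    · obtain ⟨z, hz⟩ := exists_lineParam_notMem_closure hproper hqp (subset_closure hp)
      refine ⟨z, ?_, fun h => hz (subset_closure h)⟩
      rintro rfl
      exact hz (by rwa [lineParam_zero])
    · have hnhds : (closure Ω)ᶜ ∈ 𝓝 (lineParam hqp 0) :=
        isClosed_closure.isOpen_compl.mem_nhds (by rwa [lineParam_zero])
      obtain ⟨z, hz, hz0⟩ := ((eventually_nhdsWithin_of_eventually_nhds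
        ((continuous_lineParam hqp).continuousAt.eventually hnhds)).and
          (self_mem_nhdsWithin (s := {0}ᶜ))).exists
      exact ⟨z, hz0, fun h => hz (subset_closure h)⟩
  obtain ⟨c, hc, hc0, hcz⟩ := exists_mem_dualCone_dotProduct_eq_zero hlc _ hz
  refine ⟨c, hc, hc0, fun hcq => hc p hp ?_⟩
  rw [dotProduct_add, dotProduct_smul, smul_eq_mul, hcq, zero_add] at hcz
  exact (mul_eq_zero.mp hcz).resolve_left hz0

lemma isCompact_hilbertClosedBall (hΩ : IsOpen Ω) (hlc : LinearlyConvex Ω)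
    (hproper : IsProperDomain Ω) {p : CP d} (hp : p ∈ Ω) (R : ℝ) :
    IsCompact {q | q ∈ Ω ∧ hilbertDist Ω p q ≤ R} := by
  refine IsClosed.isCompact (isClosed_of_closure_subset fun q hq => ?_)
  by_cases hqΩ : q ∈ Ω
  · have hcont := (continuousOn_hilbertDist hΩ hp).continuousAt (hΩ.mem_nhds hqΩ)
    exact ⟨hqΩ, hcont.continuousWithinAt.closure_le hq continuousWithinAt_const fun w hw => hw.2⟩
  exfalso
  obtain ⟨c₁, hc₁, hc₁0, hc₁q⟩ :=
    exists_mem_dualCone_dotProduct_eq_zero hlc q.rep_nonzero (by rwa [mk_rep])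
  obtain ⟨c₂, hc₂, hc₂0, hc₂q⟩ := exists_mem_dualCone_dotProduct_rep_ne_zero hlc hproper hp hqΩ
  -- On the ball `|c₂| / |c₁|` is bounded, but it blows up at `q`, where `c₁` vanishes.
  have hball : {q | q ∈ Ω ∧ hilbertDist Ω p q ≤ R} ⊆
      {w | dotAbs c₁ p * dotAbs c₂ w ≤ Real.exp R * dotAbs c₂ p * dotAbs c₁ w} := by
    rintro w ⟨hw, hwR⟩
    have hlog := (logCrossRatio_le_hilbertDist hΩ hp hw hc₁ hc₂ hc₁0 hc₂0).trans hwR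
    have hden : 0 < dotAbs c₁ w * dotAbs c₂ p := mul_pos (dotAbs_pos hc₁ hw) (dotAbs_pos hc₂ hp)
    rw [logCrossRatio, Real.log_le_iff_le_exp
      (div_pos (mul_pos (dotAbs_pos hc₁ hp) (dotAbs_pos hc₂ hw)) hden), div_le_iff₀ hden] at hlog
    exact hlog.trans_eq (by ring)
  have hqC := closure_minimal hball (isClosed_le (by fun_prop) (by fun_prop)) hq
  have h0 : dotAbs c₁ q = 0 := by simp [dotAbs, hc₁q]
  rw [Set.mem_ofPred_eq, h0, mul_zero] at hqC
  exact hqC.not_gt (mul_pos (dotAbs_pos hc₁ hp)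
    (div_pos (norm_pos_iff.mpr hc₂q) (norm_pos_iff.mpr q.rep_nonzero)))

end HilbertMetric

/-- For a proper linearly convex open set, closed Hilbert-metric balls are
compact, and the Hilbert metric induces the subspace topology. -/
theorem statement_3 {d : ℕ} (Ω : Set (CP d)) (hΩopen : IsOpen Ω)
    (hlc : LinearlyConvex Ω) (hproper : IsProperDomain Ω) :
    (∀ p ∈ Ω, ∀ R > 0, IsCompact {q : CP d | q ∈ Ω ∧ hilbertDist Ω p q ≤ R}) ∧
      (∀ (x : Ω) (S : Set Ω),
        S ∈ nhds x ↔ ∃ ε > 0, {q : Ω | hilbertDist Ω x q < ε} ⊆ S) := by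
  refine ⟨fun p hp R _ => isCompact_hilbertClosedBall hΩopen hlc hproper hp R, fun x S => ?_⟩
  have hf : Continuous fun q : Ω => hilbertDist Ω x q :=
    (continuousOn_hilbertDist hΩopen x.2).domRestrict
  constructor
  · refine exists_sublevel_subset_of_mem_nhds hf
      (fun y hy => hilbertDist_pos hΩopen hlc hproper x.2 y.2 (Subtype.coe_ne_coe.mpr hy.symm))
      one_pos ?_
    convert Topology.IsInducing.subtypeVal.isCompact_preimage'
      (isCompact_hilbertClosedBall hΩopen hlc hproper x.2 1) fun q hq => ⟨⟨q, hq.1⟩, rfl⟩ using 1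
    ext y
    simp
  · rintro ⟨ε, hε, hball⟩
    refine Filter.mem_of_superset ((isOpen_lt hf continuous_const).mem_nhds ?_) hball
    simpa [hilbertDist_self] using hε

end ComplexConvex
end
end

section
/- Suppose Ω ⊆ ℙ(ℂ²) is an open proper ℂ-convex set contained in the affine chart {[1:z] : z ∈ ℂ} and bounded there. Then, identifying Ω with a bounded open subset of ℂ, the Hilbert metric equals the Apollonian metric: for all z₁, z₂ ∈ Ω, d_Ω(z₁,z₂) = max over b₁,b₂ ∈ (ℂ ∪ {∞}) ∖ Ω of log(|z₁−b₁||z₂−b₂| / (|z₂−b₁||z₁−b₂|)), with the convention |z−∞|/|w−∞| = 1. -/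
/-!
A nonzero linear form on `ℂ²` vanishes at exactly one point `b` of `ℙ¹ = ℂ ∪ {∞}`, and at a
point `[v₀ : v₁]` of the affine chart its modulus is, up to a positive constant,
`|v₀| · |v₁/v₀ - b|` (just `|v₀|` when `b = ∞`). It belongs to `Ω*` exactly when `b ∉ Ω`.
In the ratios defining the Hilbert metric the constants and the factors `|v₀|` cancel, so these
ratios are exactly the Apollonian cross-ratios of `Ω`.
-/

open scoped LinearAlgebra.Projectivization MatrixGroups
open Projectivization

noncomputable section
namespace ComplexConvex

open scoped OnePoint

/-- The linear form vanishing exactly on the point `b ∈ ℂ ∪ {∞}` of `ℙ¹`, where `b ∈ ℂ`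
stands for `[1 : b]` and `∞` for `[0 : 1]`. -/
def kerFunctional (b : OnePoint ℂ) : Module.Dual ℂ (Vd 1) :=
  b.elim (LinearMap.proj 0) fun β => LinearMap.proj 1 - β • LinearMap.proj 0

@[simp]
lemma kerFunctional_infty_apply (v : Vd 1) : kerFunctional ∞ v = v 0 := rfl

@[simp]
lemma kerFunctional_coe_apply (β : ℂ) (v : Vd 1) : kerFunctional β v = v 1 - β * v 0 := rfl

lemma kerFunctional_ne_zero (b : OnePoint ℂ) : kerFunctional b ≠ 0 := by
  cases b with
  | infty => exact fun h => by simpa using LinearMap.congr_fun h (Pi.single 0 1)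
  | coe β => exact fun h => by simpa using LinearMap.congr_fun h (Pi.single 1 1)

def affineCoord (p : CP 1) : ℂ :=
  p.rep 1 / p.rep 0

/-- `|z - b|`, with the Apollonian convention `|z - ∞| = 1`. -/
def extendedDist (b : OnePoint ℂ) (z : ℂ) : ℝ :=
  b.elim 1 (dist z)

def crossRatioNorm (b₁ b₂ : OnePoint ℂ) (z w : ℂ) : ℝ :=
  extendedDist b₁ z * extendedDist b₂ w / (extendedDist b₁ w * extendedDist b₂ z)

lemma norm_kerFunctional_apply (b : OnePoint ℂ) {v : Vd 1} (hv : v 0 ≠ 0) :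
    ‖kerFunctional b v‖ = ‖v 0‖ * extendedDist b (v 1 / v 0) := by
  cases b with
  | infty => simp [extendedDist]
  | coe β =>
    have : v 1 - β * v 0 = v 0 * (v 1 / v 0 - β) := by field_simp
    simp [extendedDist, this, Complex.dist_eq]

lemma kerFunctional_apply_ne_zero_iff (b : OnePoint ℂ) {v : Vd 1} (hv : v 0 ≠ 0) :
    kerFunctional b v ≠ 0 ↔ b ≠ ↑(v 1 / v 0) := by
  cases b with
  | infty => simpa using hv
  | coe β =>
    rw [kerFunctional_coe_apply, ne_eq, ne_eq, OnePoint.coe_eq_coe, sub_eq_zero, eq_div_iff hv]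
    exact not_congr eq_comm

lemma exists_eq_smul_kerFunctional {f : Module.Dual ℂ (Vd 1)} (hf : f ≠ 0) :
    ∃ (b : OnePoint ℂ) (c : ℂ), c ≠ 0 ∧ f = c • kerFunctional b := by
  by_cases h₁ : f (Pi.single 1 1) = 0
  · refine ⟨∞, f (Pi.single 0 1), fun h₀ => hf ?_, ?_⟩ <;>
    · ext i
      fin_cases i <;> simp_all
  · refine ⟨↑(-f (Pi.single 0 1) / f (Pi.single 1 1)), f (Pi.single 1 1), h₁, ?_⟩
    ext i
    fin_cases i <;> simp [mul_div_cancel₀ _ h₁]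

lemma mem_dualSet_iff_of_rep_eq_smul {Ω : Set (CP 1)} (hchart : ∀ x ∈ Ω, x.rep 0 ≠ 0)
    {f : DualP 1} {b : OnePoint ℂ} {c : ℂ} (hc : c ≠ 0) (hf : f.rep = c • kerFunctional b) :
    f ∈ dualSet Ω ↔
      b ∉ ((↑) : ℂ → OnePoint ℂ) '' (affineCoord '' Ω) := by
  simp only [dualSet, Set.mem_ofPred_eq, hf, LinearMap.smul_apply, smul_eq_mul, Set.image_image,
    Set.mem_image, not_exists, not_and]
  exact forall₂_congr fun x hx => (mul_ne_zero_iff_left hc).trans <|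
    (kerFunctional_apply_ne_zero_iff b (hchart x hx)).trans ne_comm

lemma norm_smul_kerFunctional_ratio {c₁ c₂ : ℂ} (hc₁ : c₁ ≠ 0) (hc₂ : c₂ ≠ 0)
    (b₁ b₂ : OnePoint ℂ) {v w : Vd 1} (hv : v 0 ≠ 0) (hw : w 0 ≠ 0) :
    ‖(c₁ • kerFunctional b₁) v‖ * ‖(c₂ • kerFunctional b₂) w‖ /
        (‖(c₁ • kerFunctional b₁) w‖ * ‖(c₂ • kerFunctional b₂) v‖) =
      crossRatioNorm b₁ b₂ (v 1 / v 0) (w 1 / w 0) := by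
  simp only [LinearMap.smul_apply, smul_eq_mul, norm_mul, norm_kerFunctional_apply _ hv,
    norm_kerFunctional_apply _ hw, crossRatioNorm]
  have hK : ‖c₁‖ * ‖c₂‖ * ‖v 0‖ * ‖w 0‖ ≠ 0 := by positivity
  convert mul_div_mul_left (extendedDist b₁ (v 1 / v 0) * extendedDist b₂ (w 1 / w 0))
    (extendedDist b₁ (w 1 / w 0) * extendedDist b₂ (v 1 / v 0)) hK using 1
  ring

lemma hilbertDist_eq_sSup_crossRatioNorm {Ω : Set (CP 1)} (hchart : ∀ x ∈ Ω, x.rep 0 ≠ 0)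
    {x y : CP 1} (hx : x.rep 0 ≠ 0) (hy : y.rep 0 ≠ 0) :
    hilbertDist Ω x y = sSup {r : ℝ | ∃ b₁ ∉ ((↑) : ℂ → OnePoint ℂ) '' (affineCoord '' Ω),
      ∃ b₂ ∉ ((↑) : ℂ → OnePoint ℂ) '' (affineCoord '' Ω),
        r = Real.log (crossRatioNorm b₁ b₂ (affineCoord x) (affineCoord y))} := by
  rw [hilbertDist]
  congr 1
  ext r
  constructor
  · rintro ⟨f, hf, g, hg, rfl⟩
    obtain ⟨b₁, c₁, hc₁, hf₁⟩ := exists_eq_smul_kerFunctional f.rep_nonzero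
    obtain ⟨b₂, c₂, hc₂, hg₂⟩ := exists_eq_smul_kerFunctional g.rep_nonzero
    refine ⟨b₁, (mem_dualSet_iff_of_rep_eq_smul hchart hc₁ hf₁).1 hf,
      b₂, (mem_dualSet_iff_of_rep_eq_smul hchart hc₂ hg₂).1 hg, ?_⟩
    rw [hf₁, hg₂, norm_smul_kerFunctional_ratio hc₁ hc₂ b₁ b₂ hx hy]
    rfl
  · rintro ⟨b₁, hb₁, b₂, hb₂, rfl⟩
    obtain ⟨u₁, hu₁⟩ := exists_smul_eq_mk_rep ℂ _ (kerFunctional_ne_zero b₁)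
    obtain ⟨u₂, hu₂⟩ := exists_smul_eq_mk_rep ℂ _ (kerFunctional_ne_zero b₂)
    refine ⟨_, (mem_dualSet_iff_of_rep_eq_smul hchart u₁.ne_zero hu₁.symm).2 hb₁,
      _, (mem_dualSet_iff_of_rep_eq_smul hchart u₂.ne_zero hu₂.symm).2 hb₂, ?_⟩
    rw [← hu₁, ← hu₂, Units.smul_def, Units.smul_def,
      norm_smul_kerFunctional_ratio u₁.ne_zero u₂.ne_zero b₁ b₂ hx hy]
    rfl

lemma apollonianDist_eq_sSup_crossRatioNorm (U : Set ℂ) (z w : ℂ) :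
    apollonianDist U z w = sSup {r : ℝ | ∃ b₁ ∉ ((↑) : ℂ → OnePoint ℂ) '' U,
      ∃ b₂ ∉ ((↑) : ℂ → OnePoint ℂ) '' U, r = Real.log (crossRatioNorm b₁ b₂ z w)} := by
  rw [apollonianDist]
  congr 1
  ext r
  simp only [Set.mem_union, Set.mem_singleton_iff, Set.mem_ofPred_eq, Set.mem_compl_iff,
    OnePoint.coe_injective.mem_set_image, OnePoint.exists, crossRatioNorm, extendedDist,
    OnePoint.elim_infty, OnePoint.elim_some, OnePoint.infty_notMem_image_coe, not_false_eq_true,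
    true_and, mul_one, one_mul, div_one, Real.log_one, and_or_left, exists_or, or_assoc]

theorem statement_4_general (Ω : Set (CP 1))
    (hchart : ∀ x ∈ Ω, Projectivization.rep x 0 ≠ 0) :
    ∀ x ∈ Ω, ∀ y ∈ Ω,
      hilbertDist Ω x y =
        apollonianDist
          ((fun z : CP 1 => Projectivization.rep z 1 / Projectivization.rep z 0) '' Ω)
          (Projectivization.rep x 1 / Projectivization.rep x 0)
          (Projectivization.rep y 1 / Projectivization.rep y 0) := by
  intro x hx y hy
  exact (hilbertDist_eq_sSup_crossRatioNorm hchart (hchart x hx) (hchart y hy)).trans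
    (apollonianDist_eq_sSup_crossRatioNorm _ _ _).symm

/-- For a bounded proper `ℂ`-convex open set in an affine chart of
`ℙ(ℂ²)`, the Hilbert metric coincides with the Apollonian metric. -/
theorem statement_4 (Ω : Set (CP 1)) (hΩopen : IsOpen Ω) (hconv : CConvex Ω)
    (hproper : IsProperDomain Ω)
    (hchart : ∀ x ∈ Ω, Projectivization.rep x 0 ≠ 0)
    (hbdd : ∃ M : ℝ, ∀ x ∈ Ω,
      ‖Projectivization.rep x 1 / Projectivization.rep x 0‖ ≤ M) :
    ∀ x ∈ Ω, ∀ y ∈ Ω,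
      hilbertDist Ω x y =
        apollonianDist
          ((fun z : CP 1 => Projectivization.rep z 1 / Projectivization.rep z 0) '' Ω)
          (Projectivization.rep x 1 / Projectivization.rep x 0)
          (Projectivization.rep y 1 / Projectivization.rep y 0) :=
  statement_4_general Ω hchart

end ComplexConvex
end
end

section
/- Suppose Ω ⊆ ℙ(ℂ^{d+1}) is a proper linearly convex open set and x₀ ∈ Ω. Then there exists R > 0, depending only on x₀, such that for every φ ∈ Aut(Ω) and every lift φ̂ ∈ SL(d+1,ℂ) of φ, d_Ω(φ·x₀, x₀) ≤ R + log(‖φ̂‖·‖φ̂⁻¹‖), where ‖·‖ is the operator norm on End(ℂ^{d+1}) associated to the standard Hermitian norm. -/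
open scoped LinearAlgebra.Projectivization MatrixGroups
open Projectivization

noncomputable section
/-!
Since `Ω` is open, a Euclidean ball `B(v₀, ε)` around a lift `v₀` of `x₀` consists of lifts of
points of `Ω`, so every `f ∈ Ω*` is nonvanishing on it; and a functional nonvanishing on
`B(v₀, ε)` satisfies `ε ‖f‖ ≤ |f(v₀)|`. Applying this to `f` and to `h ∘ φ̂` (nonvanishing there
because `φ` preserves `Ω`), together with `‖h‖ ≤ ‖h ∘ φ̂‖ ‖φ̂⁻¹‖`, bounds every cross-ratio in the
definition of `d_Ω(φ x₀, x₀)` by `(‖v₀‖ / ε)² ‖φ̂‖ ‖φ̂⁻¹‖`.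
-/

namespace ContinuousLinearMap

variable {𝕜 E : Type*} [RCLike 𝕜] [NormedAddCommGroup E] [NormedSpace 𝕜 E]

theorem mul_opNorm_le_norm_apply_of_ne_zero_on_ball (ψ : E →L[𝕜] 𝕜) {v : E} {ε : ℝ}
    (hψ : ∀ u ∈ Metric.ball v ε, ψ u ≠ 0) : ε * ‖ψ‖ ≤ ‖ψ v‖ := by
  by_contra! hlt
  have hε : 0 < ε := pos_of_mul_pos_left ((norm_nonneg _).trans_lt hlt) (norm_nonneg ψ)
  obtain ⟨u, hu, hψu⟩ := ψ.exists_lt_apply_of_lt_opNorm (r := ‖ψ v‖ / ε)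
    (by rwa [div_lt_iff₀' hε])
  have hψu0 : ψ u ≠ 0 := norm_pos_iff.mp ((div_nonneg (norm_nonneg _) hε.le).trans_lt hψu)
  -- the line through `v` in the direction `u` meets `ker ψ` inside the ball
  refine hψ (v - (ψ v / ψ u) • u) ?_ ?_
  · rw [Metric.mem_ball, dist_eq_norm, sub_sub_cancel_left, norm_neg, norm_smul, norm_div]
    calc ‖ψ v‖ / ‖ψ u‖ * ‖u‖ ≤ ‖ψ v‖ / ‖ψ u‖ := mul_le_of_le_one_right (by positivity) hu.le
      _ < ε := by rwa [div_lt_iff₀ (norm_pos_iff.mpr hψu0), ← div_lt_iff₀' hε]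
  · rw [map_sub, map_smul, smul_eq_mul, div_mul_cancel₀ _ hψu0, sub_self]

theorem sq_mul_cross_le_of_ne_zero_on_ball {T S : E →L[𝕜] E} (hTS : T * S = 1)
    {α β : E →L[𝕜] 𝕜} {v : E} {ε : ℝ} (hε : 0 ≤ ε)
    (hα : ∀ u ∈ Metric.ball v ε, α u ≠ 0) (hβ : ∀ u ∈ Metric.ball v ε, β (T u) ≠ 0) :
    ε ^ 2 * (‖α (T v)‖ * ‖β v‖) ≤ ‖v‖ ^ 2 * (‖T‖ * ‖S‖) * (‖α v‖ * ‖β (T v)‖) := by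
  have hαv : ε * ‖α‖ ≤ ‖α v‖ := α.mul_opNorm_le_norm_apply_of_ne_zero_on_ball hα
  have hβTv : ε * ‖β.comp T‖ ≤ ‖β (T v)‖ :=
    (β.comp T).mul_opNorm_le_norm_apply_of_ne_zero_on_ball hβ
  have hβ : ‖β‖ ≤ ‖β.comp T‖ * ‖S‖ := by
    calc ‖β‖ = ‖(β.comp T).comp S‖ := by rw [comp_assoc, ← mul_def, hTS, one_def, comp_id]
      _ ≤ ‖β.comp T‖ * ‖S‖ := opNorm_comp_le _ _
  have hαTv : ‖α (T v)‖ ≤ ‖α‖ * (‖T‖ * ‖v‖) := α.le_opNorm_of_le (T.le_opNorm v)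
  have hβv : ‖β v‖ ≤ ‖β.comp T‖ * ‖S‖ * ‖v‖ := β.le_opNorm_of_le le_rfl |>.trans (by gcongr)
  calc ε ^ 2 * (‖α (T v)‖ * ‖β v‖)
      ≤ ε ^ 2 * (‖α‖ * (‖T‖ * ‖v‖) * (‖β.comp T‖ * ‖S‖ * ‖v‖)) := by gcongr
    _ = ‖v‖ ^ 2 * (‖T‖ * ‖S‖) * ((ε * ‖α‖) * (ε * ‖β.comp T‖)) := by ring
    _ ≤ ‖v‖ ^ 2 * (‖T‖ * ‖S‖) * (‖α v‖ * ‖β (T v)‖) := by gcongr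

end ContinuousLinearMap

namespace ComplexConvex

open scoped Matrix

variable {d : ℕ}

def cone (Ω : Set (CP d)) : Set (Vd d) :=
  {u | ∃ hu : u ≠ 0, Projectivization.mk ℂ u hu ∈ Ω}

theorem isOpen_cone {Ω : Set (CP d)} (hΩ : IsOpen Ω) : IsOpen (cone Ω) := by
  have hpre : IsOpen {v : {v : Vd d // v ≠ 0} | Projectivization.mk' ℂ v ∈ Ω} :=
    hΩ.preimage continuous_quot_mk
  convert isOpen_ne.isOpenMap_subtype_val _ hpre
  ext u
  simp only [cone, Set.mem_image, Subtype.exists, exists_and_right, exists_eq_right]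
  rfl

theorem rep_mem_cone {Ω : Set (CP d)} {x : CP d} (hx : x ∈ Ω) : x.rep ∈ cone Ω :=
  ⟨x.rep_nonzero, by rwa [Projectivization.mk_rep]⟩

theorem rep_apply_ne_zero_of_mem_cone {Ω : Set (CP d)} {f : DualP d} (hf : f ∈ dualSet Ω)
    {u : Vd d} (hu : u ∈ cone Ω) : f.rep u ≠ 0 := by
  obtain ⟨hu0, hmem⟩ := hu
  obtain ⟨a, ha⟩ := Projectivization.exists_smul_eq_mk_rep ℂ u hu0
  have := hf _ hmem
  rwa [← ha, Units.smul_def, map_smul, smul_ne_zero_iff_right a.ne_zero] at this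

theorem mulVec_ne_zero (g : SLd d) {u : Vd d} (hu : u ≠ 0) :
    (g : Matrix (Fin (d + 1)) (Fin (d + 1)) ℂ) *ᵥ u ≠ 0 :=
  (Matrix.SpecialLinearGroup.toLin' g).map_ne_zero_iff.mpr hu

theorem pslPerm_mk_mk (g : SLd d) {u : Vd d} (hu : u ≠ 0) :
    pslPerm d (QuotientGroup.mk g) (Projectivization.mk ℂ u hu) =
      Projectivization.mk ℂ ((g : Matrix (Fin (d + 1)) (Fin (d + 1)) ℂ) *ᵥ u)
        (mulVec_ne_zero g hu) :=
  Projectivization.map_mk _ (Matrix.SpecialLinearGroup.toLin' g).injective _ _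

theorem mulVec_mem_cone {Ω : Set (CP d)} {φ : PSLd d} (hφ : φ ∈ Aut Ω) {g : SLd d}
    (hg : (QuotientGroup.mk g : PSLd d) = φ) {u : Vd d} (hu : u ∈ cone Ω) :
    (g : Matrix (Fin (d + 1)) (Fin (d + 1)) ℂ) *ᵥ u ∈ cone Ω := by
  obtain ⟨hu0, hmem⟩ := hu
  refine ⟨mulVec_ne_zero g hu0, ?_⟩
  rw [← pslPerm_mk_mk g hu0, hg, ← show pslPerm d φ '' Ω = Ω from hφ]
  exact Set.mem_image_of_mem _ hmem

theorem exists_smul_mulVec_eq_rep (g : SLd d) (x : CP d) :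
    ∃ c : ℂˣ, c • ((g : Matrix (Fin (d + 1)) (Fin (d + 1)) ℂ) *ᵥ x.rep) =
      (pslPerm d (QuotientGroup.mk g) x).rep := by
  obtain ⟨c, hc⟩ := Projectivization.exists_smul_eq_mk_rep ℂ _ (mulVec_ne_zero g x.rep_nonzero)
  refine ⟨c, hc.trans ?_⟩
  rw [← pslPerm_mk_mk g x.rep_nonzero, Projectivization.mk_rep]

theorem toEuclideanCLM_mul_toEuclideanCLM_inv (g : SLd d) :
    Matrix.toEuclideanCLM (𝕜 := ℂ) (g : Matrix (Fin (d + 1)) (Fin (d + 1)) ℂ) *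
      Matrix.toEuclideanCLM (𝕜 := ℂ) ((g⁻¹ : SLd d) : Matrix (Fin (d + 1)) (Fin (d + 1)) ℂ) =
        1 := by
  rw [← map_mul, ← Matrix.SpecialLinearGroup.coe_mul, mul_inv_cancel,
    Matrix.SpecialLinearGroup.coe_one, map_one]

theorem one_le_opNorm_mul_opNorm_inv (g : SLd d) :
    1 ≤ opNorm (g : Matrix (Fin (d + 1)) (Fin (d + 1)) ℂ) *
      opNorm ((g⁻¹ : SLd d) : Matrix (Fin (d + 1)) (Fin (d + 1)) ℂ) :=
  norm_one.symm.le.trans (toEuclideanCLM_mul_toEuclideanCLM_inv g ▸ norm_mul_le _ _)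

theorem sq_mul_hilbert_cross_le {Ω : Set (CP d)} {φ : PSLd d} (hφ : φ ∈ Aut Ω) {g : SLd d}
    (hg : (QuotientGroup.mk g : PSLd d) = φ) {x : CP d} {ε : ℝ} (hε : 0 ≤ ε)
    (hball : Metric.ball (WithLp.toLp 2 x.rep) ε ⊆ WithLp.ofLp ⁻¹' cone Ω)
    {f h : DualP d} (hf : f ∈ dualSet Ω) (hh : h ∈ dualSet Ω) :
    ε ^ 2 * (‖f.rep (pslPerm d φ x).rep‖ * ‖h.rep x.rep‖) ≤
      ‖WithLp.toLp 2 x.rep‖ ^ 2 * (opNorm (g : Matrix (Fin (d + 1)) (Fin (d + 1)) ℂ) *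
        opNorm ((g⁻¹ : SLd d) : Matrix (Fin (d + 1)) (Fin (d + 1)) ℂ)) *
        (‖f.rep x.rep‖ * ‖h.rep (pslPerm d φ x).rep‖) := by
  let toCLM (ψ : Module.Dual ℂ (Vd d)) : EuclideanSpace ℂ (Fin (d + 1)) →L[ℂ] ℂ :=
    LinearMap.toContinuousLinearMap (ψ ∘ₗ (WithLp.linearEquiv 2 ℂ (Vd d)).toLinearMap)
  have toCLM_toLp (ψ : Module.Dual ℂ (Vd d)) (u : Vd d) : toCLM ψ (WithLp.toLp 2 u) = ψ u :=
    rfl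
  have key := ContinuousLinearMap.sq_mul_cross_le_of_ne_zero_on_ball
    (toEuclideanCLM_mul_toEuclideanCLM_inv g) (α := toCLM f.rep) (β := toCLM h.rep) hε
    (fun u hu => rep_apply_ne_zero_of_mem_cone hf (hball hu))
    (fun u hu => rep_apply_ne_zero_of_mem_cone hh (mulVec_mem_cone hφ hg (hball hu)))
  simp only [Matrix.toEuclideanCLM_toLp, toCLM_toLp] at key
  obtain ⟨c, hc⟩ := exists_smul_mulVec_eq_rep g x
  rw [← hg, ← hc]
  simp only [Units.smul_def, map_smul, smul_eq_mul, norm_mul, opNorm]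
  refine ((mul_le_mul_of_nonneg_left key (norm_nonneg (c : ℂ))).trans_eq ?_).trans_eq' ?_ <;>
    ring

theorem statement_12_general {d : ℕ} (Ω : Set (CP d)) (hΩopen : IsOpen Ω)
    (x₀ : CP d) (hx₀ : x₀ ∈ Ω) :
    ∃ R > 0, ∀ φ ∈ Aut Ω, ∀ g : SLd d, (QuotientGroup.mk g : PSLd d) = φ →
      hilbertDist Ω (pslPerm d φ x₀) x₀ ≤
        R + Real.log
          (opNorm (g : Matrix (Fin (d + 1)) (Fin (d + 1)) ℂ) *
            opNorm ((g⁻¹ : SLd d) : Matrix (Fin (d + 1)) (Fin (d + 1)) ℂ)) := by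
  set v := WithLp.toLp 2 x₀.rep
  have hv : v ≠ 0 := (WithLp.toLp_eq_zero 2).not.mpr x₀.rep_nonzero
  obtain ⟨ε, hε, hball⟩ : ∃ ε > 0, Metric.ball v ε ⊆ WithLp.ofLp ⁻¹' cone Ω :=
    Metric.isOpen_iff.mp ((isOpen_cone hΩopen).preimage (PiLp.continuous_ofLp 2 _)) v
      (rep_mem_cone hx₀)
  set C := (‖v‖ / ε) ^ 2
  refine ⟨|Real.log C| + 1, by positivity, fun φ hφ g hg => ?_⟩
  set P := opNorm (g : Matrix (Fin (d + 1)) (Fin (d + 1)) ℂ) *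
    opNorm ((g⁻¹ : SLd d) : Matrix (Fin (d + 1)) (Fin (d + 1)) ℂ)
  have hP : 1 ≤ P := one_le_opNorm_mul_opNorm_inv g
  have hy : pslPerm d φ x₀ ∈ Ω := (show pslPerm d φ '' Ω = Ω from hφ) ▸ ⟨x₀, hx₀, rfl⟩
  refine Real.sSup_le ?_ (by have := Real.log_nonneg hP; positivity)
  rintro _ ⟨f, hf, h, hh, rfl⟩
  have hpos {k : DualP d} (hk : k ∈ dualSet Ω) {x : CP d} (hx : x ∈ Ω) : 0 < ‖k.rep x.rep‖ :=
    norm_pos_iff.mpr (hk x hx)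
  have hratio : (‖f.rep (pslPerm d φ x₀).rep‖ * ‖h.rep x₀.rep‖) /
      (‖f.rep x₀.rep‖ * ‖h.rep (pslPerm d φ x₀).rep‖) ≤ C * P := by
    rw [div_le_iff₀ (mul_pos (hpos hf hx₀) (hpos hh hy))]
    refine le_of_mul_le_mul_left ((sq_mul_hilbert_cross_le hφ hg hε.le hball hf hh).trans_eq ?_)
      (by positivity : 0 < ε ^ 2)
    simp only [C, P, v, div_pow]
    field_simp
  calc _ ≤ Real.log (C * P) :=
        Real.log_le_log (div_pos (mul_pos (hpos hf hy) (hpos hh hx₀))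
          (mul_pos (hpos hf hx₀) (hpos hh hy))) hratio
    _ = Real.log C + Real.log P := Real.log_mul (by positivity) (by positivity)
    _ ≤ |Real.log C| + 1 + Real.log P := by linarith [le_abs_self (Real.log C)]

/-- Translation distance estimate for the Hilbert metric. -/
theorem statement_12 {d : ℕ} (Ω : Set (CP d)) (hΩopen : IsOpen Ω)
    (hlc : LinearlyConvex Ω) (hproper : IsProperDomain Ω)
    (x₀ : CP d) (hx₀ : x₀ ∈ Ω) :
    ∃ R > 0, ∀ φ ∈ Aut Ω, ∀ g : SLd d, (QuotientGroup.mk g : PSLd d) = φ →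
      hilbertDist Ω (pslPerm d φ x₀) x₀ ≤
        R + Real.log
          (opNorm (g : Matrix (Fin (d + 1)) (Fin (d + 1)) ℂ) *
            opNorm ((g⁻¹ : SLd d) : Matrix (Fin (d + 1)) (Fin (d + 1)) ℂ)) :=
  statement_12_general Ω hΩopen x₀ hx₀

end ComplexConvex
end
end

section
/- Suppose G ≤ SL(d+1,ℂ) is a connected closed subgroup that is almost unipotent, and g₁, …, g_k are fixed elements of G. Then there exists a constant C > 0 such that for every N > 0 and every choice of indices i₁, …, i_N ∈ {1,…,k}, the operator norm satisfies ‖g_{i₁} ⋯ g_{i_N}‖ ≤ C·N^d. -/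
open scoped LinearAlgebra.Projectivization MatrixGroups
open Projectivization

noncomputable section
namespace ComplexConvex

/-- A connected closed subgroup `G ≤ SL(d+1,ℂ)` is almost unipotent if it preserves a flag
of subspaces on whose successive quotients the induced action is bounded.  Boundedness of
the induced action on the quotient `V_{i+1}/V_i` is expressed using the quotient norm, via
distances to `V_i`. -/
def IsAlmostUnipotentSubgroup {d : ℕ} (G : Subgroup (SLd d)) : Prop :=
  ∃ (k : ℕ) (V : Fin (k + 2) → Submodule ℂ (Vd d)),
    StrictMono V ∧ V 0 = ⊥ ∧ V (Fin.last (k + 1)) = ⊤ ∧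
    (∀ g ∈ G, ∀ i : Fin (k + 2), ∀ v ∈ V i,
      (g : Matrix (Fin (d + 1)) (Fin (d + 1)) ℂ).mulVec v ∈ V i) ∧
    ∀ i : Fin (k + 1), ∃ C : ℝ, ∀ g ∈ G, ∀ v ∈ V i.succ,
      Metric.infDist ((g : Matrix (Fin (d + 1)) (Fin (d + 1)) ℂ).mulVec v)
          ((V i.castSucc : Submodule ℂ (Vd d)) : Set (Vd d)) ≤
        C * Metric.infDist v ((V i.castSucc : Submodule ℂ (Vd d)) : Set (Vd d))

end ComplexConvex

/-!
Let `v ∈ V_{i+1}`, let `u_a` be the image of `v` under the last `N - a` letters of a word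
`γ₁ ⋯ γ_N` in the generators, and let `w_a` be a point of `V_i` nearest to `u_a`.
Boundedness on `V_{i+1}/V_i` gives `‖u_a - w_a‖ ≤ B ‖v‖`, so the defects
`δ_a = γ_{a+1} w_{a+1} - w_a` lie in `V_i` and are `O(‖v‖)`. Telescoping,
`w_0 = P_N w_N - ∑ P_a δ_a` with `P_a = γ₁ ⋯ γ_a`, so `‖γ₁ ⋯ γ_N v‖ = ‖u_0‖` is bounded by
`N + 2` terms, each controlled by the bound on `V_i`. Induction along the flag gives
`O(N^i)` on `V_{i+1}`, and a strict flag in `ℂ^{d+1}` has at most `d + 1` steps.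
-/

open Metric

section FlagGrowth

variable {Γ E : Type*} [Monoid Γ] [NormedAddCommGroup E] [DistribMulAction Γ E]

theorem norm_list_prod_smul_le_of_infDist_le [ProperSpace E] {W : AddSubgroup E}
    (hW : IsClosed (W : Set E)) {S : Set Γ} {M K β : ℝ} {N : ℕ} (hM : 0 ≤ M) (hK : 0 ≤ K)
    (hSW : ∀ γ ∈ S, ∀ w ∈ W, γ • w ∈ W) (hSM : ∀ γ ∈ S, ∀ x : E, ‖γ • x‖ ≤ M * ‖x‖)
    (hWK : ∀ l : List Γ, (∀ γ ∈ l, γ ∈ S) → l.length ≤ N → ∀ w ∈ W, ‖l.prod • w‖ ≤ K * ‖w‖)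
    {v : E} (hv : ∀ l : List Γ, (∀ γ ∈ l, γ ∈ S) → infDist (l.prod • v) W ≤ β)
    {l : List Γ} (hl : ∀ γ ∈ l, γ ∈ S) (hlN : l.length ≤ N) :
    ‖l.prod • v‖ ≤ β + K * (‖v‖ + β) + l.length * (K * ((M + 1) * β)) := by
  choose π hπW hπ using fun x => hW.exists_infDist_eq_dist ⟨0, W.zero_mem⟩ x
  have hnear : ∀ l : List Γ, (∀ γ ∈ l, γ ∈ S) → ‖l.prod • v - π (l.prod • v)‖ ≤ β :=
    fun l hl => by simpa [hπ, dist_eq_norm] using hv l hl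
  -- The telescoping sum, with the prefix `q` generalized for the induction on `l`.
  have htel : ∀ l : List Γ, (∀ γ ∈ l, γ ∈ S) → ∀ q : List Γ, (∀ γ ∈ q, γ ∈ S) →
      q.length + l.length ≤ N →
      ‖q.prod • π (l.prod • v) - (q ++ l).prod • π v‖ ≤ l.length * (K * ((M + 1) * β)) := by
    intro l
    induction l with
    | nil => intro _ q _ _; simp
    | cons γ l ih =>
      intro hγl q hq hlen
      have hγ : γ ∈ S := hγl γ List.mem_cons_self
      have hl : ∀ γ ∈ l, γ ∈ S := fun δ hδ => hγl δ (List.mem_cons_of_mem _ hδ)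
      set u := l.prod • v
      have hdefect : ‖γ • π u - π (γ • u)‖ ≤ (M + 1) * β := by
        have h1 := hnear l hl
        have h2 := hnear (γ :: l) hγl
        rw [List.prod_cons, mul_smul] at h2
        calc ‖γ • π u - π (γ • u)‖ = ‖γ • (π u - u) + (γ • u - π (γ • u))‖ := by
              rw [smul_sub]; abel_nf
          _ ≤ M * ‖π u - u‖ + β := (norm_add_le _ _).trans (add_le_add (hSM γ hγ _) h2)
          _ ≤ (M + 1) * β := by rw [norm_sub_rev]; nlinarith
      have hq' : ∀ δ ∈ q ++ [γ], δ ∈ S := by simpa [or_imp, forall_and] using ⟨hq, hγ⟩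
      have ih' := ih hl (q ++ [γ]) hq' (by simp at hlen ⊢; omega)
      have hqδ := hWK q hq (by simp at hlen; omega) _
        (W.sub_mem (hSW γ hγ _ (hπW u)) (hπW (γ • u)))
      calc ‖q.prod • π ((γ :: l).prod • v) - (q ++ γ :: l).prod • π v‖
          = ‖(q ++ [γ]).prod • π u - (q ++ [γ] ++ l).prod • π v
              - q.prod • (γ • π u - π (γ • u))‖ := by
            simp only [List.prod_cons, List.prod_append, List.prod_nil, mul_one, mul_smul,
              smul_sub, List.append_assoc, List.singleton_append, u]
            abel_nf
        _ ≤ l.length * (K * ((M + 1) * β)) + K * ((M + 1) * β) :=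
            (norm_sub_le _ _).trans (add_le_add ih' (hqδ.trans (by gcongr)))
        _ = (γ :: l).length * (K * ((M + 1) * β)) := by push_cast [List.length_cons]; ring
  have hπv : ‖π v‖ ≤ ‖v‖ + β := by
    have := hnear [] (by simp)
    rw [List.prod_nil, one_smul] at this
    linarith [norm_le_norm_add_norm_sub v (π v)]
  calc ‖l.prod • v‖
      = ‖(l.prod • v - π (l.prod • v)) + (([] : List Γ).prod • π (l.prod • v)
          - ([] ++ l).prod • π v) + l.prod • π v‖ := by simp
    _ ≤ β + l.length * (K * ((M + 1) * β)) + K * (‖v‖ + β) := by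
        refine norm_add₃_le.trans (add_le_add (add_le_add (hnear l hl) ?_) ?_)
        · exact htel l hl [] (by simp) (by simpa using hlN)
        · exact (hWK l hl hlN _ (hπW v)).trans (by gcongr)
    _ = _ := by ring

theorem exists_norm_list_prod_smul_le_pow_succ [ProperSpace E] {W U : AddSubgroup E}
    (hW : IsClosed (W : Set E)) {S : Set Γ} {M C D : ℝ} {n : ℕ} (hM : 0 ≤ M) (hD : 0 ≤ D)
    (hSW : ∀ γ ∈ S, ∀ w ∈ W, γ • w ∈ W) (hSM : ∀ γ ∈ S, ∀ x : E, ‖γ • x‖ ≤ M * ‖x‖)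
    (hWD : ∀ l : List Γ, (∀ γ ∈ l, γ ∈ S) → ∀ w ∈ W,
      ‖l.prod • w‖ ≤ D * (l.length + 1) ^ n * ‖w‖)
    (hUC : ∀ l : List Γ, (∀ γ ∈ l, γ ∈ S) → ∀ v ∈ U,
      infDist (l.prod • v) W ≤ C * infDist v W) :
    ∃ D' : ℝ, 0 ≤ D' ∧ ∀ l : List Γ, (∀ γ ∈ l, γ ∈ S) → ∀ v ∈ U,
      ‖l.prod • v‖ ≤ D' * (l.length + 1) ^ (n + 1) * ‖v‖ := by
  set B := max C 0
  have hB : 0 ≤ B := le_max_right _ _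
  refine ⟨B + D * (1 + B) + D * ((M + 1) * B), by positivity, fun l hl v hv => ?_⟩
  set X : ℝ := l.length + 1
  have hX : 1 ≤ X := by simp [X]
  have hK : ∀ q : List Γ, (∀ γ ∈ q, γ ∈ S) → q.length ≤ l.length → ∀ w ∈ W,
      ‖q.prod • w‖ ≤ D * X ^ n * ‖w‖ := fun q hq hql w hw =>
    (hWD q hq w hw).trans (by gcongr; simpa [X] using hql)
  have hβ : ∀ q : List Γ, (∀ γ ∈ q, γ ∈ S) → infDist (q.prod • v) W ≤ B * ‖v‖ := fun q hq =>
    (hUC q hq v hv).trans <| mul_le_mul (le_max_left _ _)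
      (by simpa using infDist_le_dist_of_mem (x := v) W.zero_mem) infDist_nonneg hB
  have h := norm_list_prod_smul_le_of_infDist_le hW hM (by positivity) hSW hSM hK hβ hl le_rfl
  have hXn : X ^ n ≤ X ^ (n + 1) := pow_le_pow_right₀ hX n.le_succ
  have hlX : (l.length : ℝ) * X ^ n ≤ X ^ (n + 1) := by
    rw [pow_succ']
    exact mul_le_mul_of_nonneg_right (by simp [X]) (by positivity)
  calc ‖l.prod • v‖ ≤ B * ‖v‖ + D * X ^ n * (‖v‖ + B * ‖v‖)
        + l.length * (D * X ^ n * ((M + 1) * (B * ‖v‖))) := h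
    _ = (B * 1 + D * (1 + B) * X ^ n + D * ((M + 1) * B) * (l.length * X ^ n)) * ‖v‖ := by ring
    _ ≤ (B * X ^ (n + 1) + D * (1 + B) * X ^ (n + 1) + D * ((M + 1) * B) * X ^ (n + 1))
          * ‖v‖ := by
        gcongr
        exact one_le_pow₀ hX
    _ = _ := by ring

theorem exists_norm_list_prod_smul_le_of_flag [ProperSpace E] {k : ℕ}
    {V : Fin (k + 2) → AddSubgroup E} (hV : ∀ i, IsClosed (V i : Set E)) (hV0 : V 0 = ⊥)
    {G : Submonoid Γ} (hGV : ∀ γ ∈ G, ∀ i, ∀ v ∈ V i, γ • v ∈ V i)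
    (hGC : ∀ i : Fin (k + 1), ∃ C : ℝ, ∀ γ ∈ G, ∀ v ∈ V i.succ,
      infDist (γ • v) (V i.castSucc) ≤ C * infDist v (V i.castSucc))
    {S : Set Γ} (hSG : S ⊆ G) {M : ℝ} (hM : 0 ≤ M) (hSM : ∀ γ ∈ S, ∀ x : E, ‖γ • x‖ ≤ M * ‖x‖) :
    ∃ D : ℝ, 0 ≤ D ∧ ∀ l : List Γ, (∀ γ ∈ l, γ ∈ S) → ∀ v ∈ V (Fin.last (k + 1)),
      ‖l.prod • v‖ ≤ D * (l.length + 1) ^ k * ‖v‖ := by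
  have hprod : ∀ l : List Γ, (∀ γ ∈ l, γ ∈ S) → l.prod ∈ G := fun l hl =>
    list_prod_mem fun γ hγ => hSG (hl γ hγ)
  have hlevel : ∀ i : Fin (k + 1), ∃ D : ℝ, 0 ≤ D ∧ ∀ l : List Γ, (∀ γ ∈ l, γ ∈ S) →
      ∀ v ∈ V i.succ, ‖l.prod • v‖ ≤ D * (l.length + 1) ^ (i : ℕ) * ‖v‖ := by
    intro i
    induction i using Fin.induction with
    | zero =>
      obtain ⟨C, hC⟩ := hGC 0
      refine ⟨max C 0, le_max_right _ _, fun l hl v hv => ?_⟩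
      have h := hC _ (hprod l hl) v hv
      simp only [Fin.castSucc_zero, hV0, AddSubgroup.coe_bot, infDist_singleton,
        dist_zero_right] at h
      simpa using h.trans (by gcongr; exact le_max_left _ _)
    | succ i ih =>
      obtain ⟨D, hD, hDb⟩ := ih
      obtain ⟨C, hC⟩ := hGC i.succ
      rw [Fin.succ_castSucc] at hDb
      simpa using exists_norm_list_prod_smul_le_pow_succ (hV _) hM hD
        (fun γ hγ => hGV γ (hSG hγ) _) hSM hDb fun l hl => hC _ (hprod l hl)
  simpa using hlevel (Fin.last k)

end FlagGrowth

theorem Submodule.length_le_finrank_of_strictMono {K E : Type*} [DivisionRing K] [AddCommGroup E]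
    [Module K E] [FiniteDimensional K E] {k : ℕ} {V : Fin (k + 1) → Submodule K E}
    (hV : StrictMono V) : k ≤ Module.finrank K E := by
  let f : Fin (k + 1) → Fin (Module.finrank K E + 1) := fun i =>
    ⟨Module.finrank K (V i), Nat.lt_succ_of_le (Submodule.finrank_le _)⟩
  have hf : Function.Injective f := fun i j hij =>
    (Submodule.finrank_strictMono.comp hV).injective (Fin.mk.inj_iff.mp hij)
  simpa using Fintype.card_le_of_injective f hf

theorem Matrix.exists_forall_norm_mulVec_le {ι n α : Type*} [Finite ι] [Fintype n]
    [NormedRing α] (A : ι → Matrix n n α) :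
    ∃ M : ℝ, 0 ≤ M ∧ ∀ i v, ‖(A i).mulVec v‖ ≤ M * ‖v‖ := by
  let _ : NormedAddCommGroup (Matrix n n α) := Matrix.linftyOpNormedAddCommGroup
  obtain ⟨M, hM⟩ := Finite.exists_le fun i => ‖A i‖
  exact ⟨max M 0, le_max_right _ _, fun i v => (Matrix.linfty_opNorm_mulVec _ _).trans
    (by gcongr; exact (hM i).trans (le_max_left _ _))⟩

theorem Matrix.norm_toEuclideanCLM_le {ι 𝕜 : Type*} [RCLike 𝕜] [Fintype ι] [DecidableEq ι]
    (A : Matrix ι ι 𝕜) {c : ℝ} (hc : 0 ≤ c) (h : ∀ v, ‖A.mulVec v‖ ≤ c * ‖v‖) :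
    ‖Matrix.toEuclideanCLM (𝕜 := 𝕜) A‖ ≤ √(Fintype.card ι) * c := by
  refine ContinuousLinearMap.opNorm_le_bound _ (by positivity) fun x => ?_
  have hto : ∀ y : ι → 𝕜, ‖WithLp.toLp 2 y‖ ≤ √(Fintype.card ι) * ‖y‖ := fun y => by
    simpa [Real.sqrt_eq_rpow, one_div] using
      (PiLp.lipschitzWith_toLp 2 (fun _ : ι => 𝕜)).dist_le_mul y 0
  have hof : ‖WithLp.ofLp x‖ ≤ ‖x‖ := by
    simpa using (PiLp.lipschitzWith_ofLp 2 (fun _ : ι => 𝕜)).dist_le_mul x 0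
  calc ‖Matrix.toEuclideanCLM (𝕜 := 𝕜) A x‖ = ‖WithLp.toLp 2 (A.mulVec (WithLp.ofLp x))‖ := rfl
    _ ≤ √(Fintype.card ι) * (c * ‖x‖) := (hto _).trans (by gcongr; exact (h _).trans (by gcongr))
    _ = _ := by ring

namespace ComplexConvex

theorem statement_15_general {d : ℕ} (G : Subgroup (SLd d))
    (hau : IsAlmostUnipotentSubgroup G) (k : ℕ) (g : Fin k → G) :
    ∃ C > 0, ∀ N : ℕ, 0 < N → ∀ idx : Fin N → Fin k,
      opNorm ((((List.ofFn fun j => (g (idx j) : SLd d)).prod : SLd d) :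
          Matrix (Fin (d + 1)) (Fin (d + 1)) ℂ)) ≤ C * (N : ℝ) ^ d := by
  obtain ⟨m, V, hVmono, hV0, hVtop, hGV, hGC⟩ := hau
  have hmd : m + 1 ≤ d + 1 := by simpa using Submodule.length_le_finrank_of_strictMono hVmono
  obtain ⟨M, hM, hgM⟩ := Matrix.exists_forall_norm_mulVec_le fun j =>
    ((g j : SLd d) : Matrix (Fin (d + 1)) (Fin (d + 1)) ℂ)
  set S : Set (SLd d) := Set.range fun j => (g j : SLd d)
  obtain ⟨D, hD, hDb⟩ := exists_norm_list_prod_smul_le_of_flag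
    (V := fun i => (V i).toAddSubgroup) (fun i => (V i).closed_of_finiteDimensional)
    (by simp [hV0]) (G := G.toSubmonoid) hGV hGC (S := S) (by rintro _ ⟨j, rfl⟩; exact (g j).2)
    hM (by rintro _ ⟨j, rfl⟩; exact hgM j)
  refine ⟨√(d + 1) * ((D + 1) * 2 ^ d), by positivity, fun N hN idx => ?_⟩
  set l := List.ofFn fun j => (g (idx j) : SLd d)
  have hl : ∀ γ ∈ l, γ ∈ S := by simp [l, S, List.mem_ofFn]
  have hpow : ((N : ℝ) + 1) ^ m ≤ 2 ^ d * (N : ℝ) ^ d := by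
    have hN1 : (1 : ℝ) ≤ N := by exact_mod_cast hN
    calc ((N : ℝ) + 1) ^ m ≤ (N + 1) ^ d := pow_le_pow_right₀ (by linarith) (by omega)
      _ ≤ (2 * N) ^ d := by gcongr; linarith
      _ = _ := mul_pow _ _ _
  have := Matrix.norm_toEuclideanCLM_le ((l.prod : SLd d) : Matrix (Fin (d + 1)) (Fin (d + 1)) ℂ)
    (c := (D + 1) * 2 ^ d * (N : ℝ) ^ d) (by positivity) fun v => by
      refine (hDb l hl v (by simp [hVtop])).trans ?_
      simp only [l, List.length_ofFn]
      gcongr ?_ * ‖v‖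
      calc D * ((N : ℝ) + 1) ^ m ≤ (D + 1) * (2 ^ d * (N : ℝ) ^ d) := by gcongr; linarith
        _ = _ := by ring
  simpa [opNorm, mul_assoc] using this

/-- Polynomial growth of word products in an almost unipotent group. -/
theorem statement_15 {d : ℕ} (G : Subgroup (SLd d))
    (hclosed : IsClosed (G : Set (SLd d))) (hconn : IsConnected (G : Set (SLd d)))
    (hau : IsAlmostUnipotentSubgroup G) (k : ℕ) (g : Fin k → G) :
    ∃ C > 0, ∀ N : ℕ, 0 < N → ∀ idx : Fin N → Fin k,
      opNorm ((((List.ofFn fun j => (g (idx j) : SLd d)).prod : SLd d) :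
          Matrix (Fin (d + 1)) (Fin (d + 1)) ℂ)) ≤ C * (N : ℝ) ^ d :=
  statement_15_general G hau k g

end ComplexConvex
end
end
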